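/- arXiv:2504.03395 — 8 statements merged into one kernel-verified Lean document; each statement's English description precedes it below -/
import Mathlib

section
/- Let T ∈ (0,∞] and f : [0,T) → [0,∞) be continuous. Suppose there exist C > 0 and 1 ≤ p < q < ∞ such that f(t₂) - f(t₁) ≤ C ∫_{t₁}^{t₂} (f(t)^p + f(t)^q) dt for all 0 ≤ t₁ ≤ t₂ < T. If T < ∞ and limsup_{t→T} f(t) = ∞, then liminf_{t→T} (T-t)^{1/(q-1)} f(t) > 0. -/
open MeasureTheory Filter Set
open scoped Topology

/-- Blow-up rate part of the general blow-up/convergence lemma: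
if `f` is continuous nonnegative on `[0,T)`, satisfies the integral growth
inequality with constants `C > 0`, `1 ≤ p < q < ∞`, `T < ∞`, and
`limsup_{t→T} f(t) = ∞`, then `liminf_{t→T} (T-t)^{1/(q-1)} f(t) > 0`. -/
theorem blowup_rate
    (T : ℝ) (hT : 0 < T) (f : ℝ → ℝ) (C p q : ℝ)
    (hf_cont : ContinuousOn f (Set.Ico 0 T))
    (hf_nonneg : ∀ t ∈ Set.Ico (0:ℝ) T, 0 ≤ f t)
    (hC : 0 < C) (hp : 1 ≤ p) (hpq : p < q)
    (hineq : ∀ t₁ t₂ : ℝ, 0 ≤ t₁ → t₁ ≤ t₂ → t₂ < T →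
      f t₂ - f t₁ ≤ C * ∫ t in t₁..t₂, (f t ^ p + f t ^ q))
    (hblow : ∀ M : ℝ, ∃ᶠ t in 𝓝[<] T, M < f t) :
    ∃ c > 0, ∀ᶠ t in 𝓝[<] T, c ≤ (T - t) ^ (1 / (q - 1)) * f t := by
  have hq1 : 1 < q := lt_of_le_of_lt hp hpq
  have hq0 : (0:ℝ) < q - 1 := by linarith
  have h2q : (0:ℝ) < (2:ℝ) ^ q := Real.rpow_pos_of_pos (by norm_num) q
  set ε : ℝ := 1 / (4 * C * (2:ℝ) ^ q) with hε_def
  have hε : 0 < ε := by positivity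
  -- Key bootstrap lemma
  have key : ∀ M : ℝ, 1 ≤ M → ∀ t₀ : ℝ, 0 ≤ t₀ → t₀ < T →
      T - t₀ ≤ M / (4 * C * (2 * M) ^ q) → ¬ f t₀ ≤ M := by
    intro M hM t₀ ht₀0 ht₀T hδ hfM
    have hM0 : (0:ℝ) < M := by linarith
    have h2M0 : (0:ℝ) < 2 * M := by linarith
    have h2Mq : (0:ℝ) < (2 * M) ^ q := Real.rpow_pos_of_pos h2M0 q
    obtain ⟨b, hbf, hbmem⟩ :=
      ((hblow (2 * M)).and_eventually
        (Ioo_mem_nhdsLT_of_mem (⟨ht₀T, le_refl T⟩ : T ∈ Set.Ioc t₀ T))).exists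
    have hbT : b < T := hbmem.2
    have ht₀b : t₀ < b := hbmem.1
    -- the set where f reaches 2M
    set S : Set ℝ := Set.Icc t₀ b ∩ f ⁻¹' Set.Ici (2 * M) with hS_def
    have hsubIco : Set.Icc t₀ b ⊆ Set.Ico 0 T := fun x hx =>
      ⟨le_trans ht₀0 hx.1, lt_of_le_of_lt hx.2 hbT⟩
    have hS_closed : IsClosed S :=
      ContinuousOn.preimage_isClosed_of_isClosed
        (hf_cont.mono hsubIco) isClosed_Icc isClosed_Ici
    have hS_ne : S.Nonempty := ⟨b, ⟨ht₀b.le, le_refl b⟩, le_of_lt hbf⟩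
    have hS_bdd : BddBelow S := ⟨t₀, fun x hx => hx.1.1⟩
    set s₀ : ℝ := sInf S with hs₀_def
    have hs₀S : s₀ ∈ S := hS_closed.csInf_mem hS_ne hS_bdd
    have hs₀_ge : t₀ ≤ s₀ := hs₀S.1.1
    have hs₀_le : s₀ ≤ b := hs₀S.1.2
    have hfs₀ : 2 * M ≤ f s₀ := hs₀S.2
    have hs₀_gt : t₀ < s₀ := by
      rcases lt_or_eq_of_le hs₀_ge with h | h
      · exact h
      · exfalso; rw [← h] at hfs₀; linarith
    have hs₀T : s₀ < T := lt_of_le_of_lt hs₀_le hbT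
    -- before s₀, f < 2M
    have hlt : ∀ s ∈ Set.Ico t₀ s₀, f s < 2 * M := by
      intro s hs
      by_contra h
      push_neg at h
      have : s₀ ≤ s := csInf_le hS_bdd ⟨⟨hs.1, le_trans hs.2.le hs₀_le⟩, h⟩
      exact absurd hs.2 (not_lt.mpr this)
    -- on [t₀, s₀], f ≤ 2M (limit at s₀)
    have hle : ∀ s ∈ Set.Icc t₀ s₀, f s ≤ 2 * M := by
      intro s hs
      rcases lt_or_eq_of_le hs.2 with h | h
      · exact (hlt s ⟨hs.1, h⟩).le
      · rw [h]
        have hsub : Set.Icc t₀ s₀ ⊆ Set.Ico 0 T := fun x hx =>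
          ⟨le_trans ht₀0 hx.1, lt_of_le_of_lt hx.2 hs₀T⟩
        have hcw : ContinuousWithinAt f (Set.Ico t₀ s₀) s₀ :=
          ((hf_cont.mono hsub) s₀ ⟨hs₀_ge, le_refl s₀⟩).mono Set.Ico_subset_Icc_self
        have hne : (𝓝[Set.Ico t₀ s₀] s₀).NeBot := by
          refine mem_closure_iff_nhdsWithin_neBot.mp ?_
          rw [closure_Ico (ne_of_lt hs₀_gt)]
          exact ⟨hs₀_ge, le_refl s₀⟩
        exact le_of_tendsto hcw (eventually_nhdsWithin_of_forall
          (fun x hx => (hlt x hx).le))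
    -- integrability
    have huIcc : Set.uIcc t₀ s₀ = Set.Icc t₀ s₀ := Set.uIcc_of_le hs₀_ge
    have hsub : Set.Icc t₀ s₀ ⊆ Set.Ico 0 T := fun x hx =>
      ⟨le_trans ht₀0 hx.1, lt_of_le_of_lt hx.2 hs₀T⟩
    have hfc : ContinuousOn f (Set.Icc t₀ s₀) := hf_cont.mono hsub
    have hg_cont : ContinuousOn (fun t => f t ^ p + f t ^ q) (Set.Icc t₀ s₀) :=
      (hfc.rpow_const (fun x _ => Or.inr (by linarith))).add
        (hfc.rpow_const (fun x _ => Or.inr (by linarith)))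
    have hg_int : IntervalIntegrable (fun t => f t ^ p + f t ^ q)
        MeasureTheory.volume t₀ s₀ := by
      apply ContinuousOn.intervalIntegrable
      rwa [huIcc]
    -- pointwise bound
    have hbound : ∀ x ∈ Set.Icc t₀ s₀,
        f x ^ p + f x ^ q ≤ 2 * (2 * M) ^ q := by
      intro x hx
      have hfx0 : 0 ≤ f x := hf_nonneg x (hsub hx)
      have hfx : f x ≤ 2 * M := hle x hx
      have h1 : f x ^ p ≤ (2 * M) ^ p := Real.rpow_le_rpow hfx0 hfx (by linarith)
      have h2 : (2 * M) ^ p ≤ (2 * M) ^ q :=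
        Real.rpow_le_rpow_of_exponent_le (by linarith) hpq.le
      have h3 : f x ^ q ≤ (2 * M) ^ q := Real.rpow_le_rpow hfx0 hfx (by linarith)
      linarith
    -- integral bound
    have hint : ∫ t in t₀..s₀, (f t ^ p + f t ^ q) ≤ (s₀ - t₀) * (2 * (2 * M) ^ q) := by
      have := intervalIntegral.integral_mono_on hs₀_ge hg_int
        (intervalIntegrable_const) hbound
      rwa [intervalIntegral.integral_const, smul_eq_mul] at this
    have hgrow := hineq t₀ s₀ ht₀0 hs₀_ge hs₀T
    have hchain : M ≤ C * ((s₀ - t₀) * (2 * (2 * M) ^ q)) := by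
      have h1 : 2 * M - M ≤ f s₀ - f t₀ := by linarith
      have h2 : C * (∫ t in t₀..s₀, (f t ^ p + f t ^ q)) ≤
          C * ((s₀ - t₀) * (2 * (2 * M) ^ q)) :=
        mul_le_mul_of_nonneg_left hint hC.le
      linarith
    have hs₀δ : s₀ - t₀ ≤ M / (4 * C * (2 * M) ^ q) := le_trans (by linarith) hδ
    have : M ≤ M / 2 := by
      have h2 : C * ((s₀ - t₀) * (2 * (2 * M) ^ q)) ≤
          C * (M / (4 * C * (2 * M) ^ q) * (2 * (2 * M) ^ q)) := by
        apply mul_le_mul_of_nonneg_left _ hC.le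
        apply mul_le_mul_of_nonneg_right hs₀δ (by positivity)
      have h3 : C * (M / (4 * C * (2 * M) ^ q) * (2 * (2 * M) ^ q)) = M / 2 := by
        field_simp
        ring
      linarith
    linarith
  -- conclusion
  refine ⟨ε ^ (1 / (q - 1)), Real.rpow_pos_of_pos hε _, ?_⟩
  have haT : max (T - ε) 0 < T := by
    apply max_lt (by linarith) hT
  filter_upwards [Ioo_mem_nhdsLT_of_mem
    (⟨haT, le_refl T⟩ : T ∈ Set.Ioc (max (T - ε) 0) T)] with t ht
  have ht0 : 0 ≤ t := le_trans (le_max_right _ _) ht.1.le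
  have htT : t < T := ht.2
  have hs : 0 < T - t := by linarith
  have hsε : T - t < ε := by
    have := lt_of_le_of_lt (le_max_left (T - ε) 0) ht.1
    linarith
  set s : ℝ := T - t with hs_def
  set M : ℝ := (ε / s) ^ (1 / (q - 1)) with hM_def
  have hεs1 : 1 ≤ ε / s := (le_div_iff₀ hs).mpr (by linarith)
  have hεs0 : 0 < ε / s := by positivity
  have hM1 : 1 ≤ M := by
    calc (1:ℝ) = (ε / s) ^ (0:ℝ) := (Real.rpow_zero _).symm
    _ ≤ M := Real.rpow_le_rpow_of_exponent_le hεs1 (by positivity)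
  have hM0 : 0 < M := by linarith
  have hMq1 : M ^ (q - 1) = ε / s := by
    rw [hM_def, ← Real.rpow_mul hεs0.le]
    rw [one_div_mul_cancel (ne_of_gt hq0), Real.rpow_one]
  have hMq : M ^ q = (ε / s) * M := by
    have : M ^ q = M ^ (q - 1) * M ^ (1:ℝ) := by
      rw [← Real.rpow_add hM0]; ring_nf
    rw [this, hMq1, Real.rpow_one]
  have h2Mq : (2 * M) ^ q = (2:ℝ) ^ q * ((ε / s) * M) := by
    rw [Real.mul_rpow (by norm_num) hM0.le, hMq]
  have hδeq : M / (4 * C * (2 * M) ^ q) = s := by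
    rw [h2Mq, hε_def]
    field_simp
  have hkey := key M hM1 t ht0 htT (by rw [hδeq])
  push_neg at hkey
  have hsq : 0 < s ^ (1 / (q - 1)) := Real.rpow_pos_of_pos hs _
  calc ε ^ (1 / (q - 1)) = (s * (ε / s)) ^ (1 / (q - 1)) := by
        rw [mul_div_cancel₀ _ (ne_of_gt hs)]
    _ = s ^ (1 / (q - 1)) * M := Real.mul_rpow hs.le hεs0.le
    _ ≤ s ^ (1 / (q - 1)) * f t := by
        apply mul_le_mul_of_nonneg_left hkey.le hsq.le
    _ = (T - t) ^ (1 / (q - 1)) * f t := by rw [hs_def]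
end

section
/- Let T = ∞ and f : [0,∞) → [0,∞) be continuous. Suppose there exist C > 0 and 1 ≤ p < q < ∞ such that f(t₂) - f(t₁) ≤ C ∫_{t₁}^{t₂} (f(t)^p + f(t)^q) dt for all 0 ≤ t₁ ≤ t₂ < ∞. If there exists a sequence t_j ↗ ∞ with limsup_{j→∞}(t_{j+1} - t_j) < ∞ and f(t_j) → 0, then lim_{t→∞} f(t) = 0. -/
open MeasureTheory Filter Set
open scoped Topology

section aux

variable {f : ℝ → ℝ} {C p q : ℝ}

lemma aux_integrable (hf_cont : ContinuousOn f (Set.Ici 0))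
    (hp : 1 ≤ p) (hq : 1 ≤ q)
    {a b : ℝ} (ha : 0 ≤ a) (hab : a ≤ b) :
    IntervalIntegrable (fun t => f t ^ p + f t ^ q) volume a b := by
  apply ContinuousOn.intervalIntegrable
  have hsub : Set.uIcc a b ⊆ Set.Ici 0 := by
    rw [Set.uIcc_of_le hab]
    exact fun x hx => le_trans ha hx.1
  have hc : ContinuousOn f (Set.uIcc a b) := hf_cont.mono hsub
  exact (hc.rpow_const fun x hx => Or.inr (by linarith)).add
        (hc.rpow_const fun x hx => Or.inr (by linarith))

lemma aux_double (hf_cont : ContinuousOn f (Set.Ici 0))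
    (hf_nonneg : ∀ t : ℝ, 0 ≤ t → 0 ≤ f t)
    (hC : 0 < C) (hp : 1 ≤ p) (hq : 1 ≤ q)
    (hineq : ∀ t₁ t₂ : ℝ, 0 ≤ t₁ → t₁ ≤ t₂ →
      f t₂ - f t₁ ≤ C * ∫ t in t₁..t₂, (f t ^ p + f t ^ q))
    {a b : ℝ} (ha : 0 ≤ a) (hab : a ≤ b) (hlen : b - a ≤ 1 / (4 * C))
    (hle1 : ∀ s ∈ Set.Icc a b, f s ≤ 1) :
    ∀ s ∈ Set.Icc a b, f s ≤ 2 * f a := by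
  have hIccsub : Set.Icc a b ⊆ Set.Ici 0 := fun x hx => le_trans ha hx.1
  have hc : ContinuousOn f (Set.Icc a b) := hf_cont.mono hIccsub
  obtain ⟨s₀, hs₀mem, hs₀max⟩ :=
    isCompact_Icc.exists_isMaxOn (Set.nonempty_Icc.mpr hab) hc
  set M := f s₀ with hM
  have hM0 : 0 ≤ M := hf_nonneg s₀ (le_trans ha hs₀mem.1)
  have hpow : ∀ r : ℝ, 1 ≤ r → ∀ u ∈ Set.Icc a b, f u ^ r ≤ f u := by
    intro r hr u hu
    rcases eq_or_lt_of_le (hf_nonneg u (le_trans ha hu.1)) with h0 | h0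
    · rw [← h0, Real.zero_rpow (by linarith)]
    · calc f u ^ r ≤ f u ^ (1 : ℝ) :=
            Real.rpow_le_rpow_of_exponent_ge h0 (hle1 u hu) hr
        _ = f u := Real.rpow_one _
  have hint : (∫ u in a..s₀, (f u ^ p + f u ^ q)) ≤ (s₀ - a) * (2 * M) := by
    have hmono : ∀ x ∈ Set.Icc a s₀, f x ^ p + f x ^ q ≤ 2 * M := by
      intro x hx
      have hx' : x ∈ Set.Icc a b := ⟨hx.1, le_trans hx.2 hs₀mem.2⟩
      have h1 := hpow p hp x hx'
      have h2 := hpow q hq x hx'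
      have h3 : f x ≤ M := hs₀max hx'
      linarith
    calc (∫ u in a..s₀, (f u ^ p + f u ^ q))
        ≤ ∫ _ in a..s₀, (2 * M) :=
          intervalIntegral.integral_mono_on hs₀mem.1
            (aux_integrable hf_cont hp hq ha hs₀mem.1)
            intervalIntegrable_const hmono
      _ = (s₀ - a) * (2 * M) := by simp [smul_eq_mul]; ring
  have hkey : M - f a ≤ C * ((s₀ - a) * (2 * M)) := by
    calc M - f a ≤ C * ∫ u in a..s₀, (f u ^ p + f u ^ q) :=
          hineq a s₀ ha hs₀mem.1
      _ ≤ C * ((s₀ - a) * (2 * M)) := by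
          exact mul_le_mul_of_nonneg_left hint hC.le
  have hlen' : s₀ - a ≤ 1 / (4 * C) := by
    have := hs₀mem.2; linarith
  have hhalf : C * ((s₀ - a) * (2 * M)) ≤ M / 2 := by
    have h1 : 0 ≤ (1 / (4 * C) - (s₀ - a)) * (2 * C * M) := by
      apply mul_nonneg (by linarith)
      positivity
    have h2 : C * (1 / (4 * C)) = 1 / 4 := by field_simp
    nlinarith
  have hM2 : M ≤ 2 * f a := by linarith
  intro s hs
  exact le_trans (hs₀max hs) hM2

lemma aux_iter (hf_cont : ContinuousOn f (Set.Ici 0))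
    (hf_nonneg : ∀ t : ℝ, 0 ≤ t → 0 ≤ f t)
    (hC : 0 < C) (hp : 1 ≤ p) (hq : 1 ≤ q)
    (hineq : ∀ t₁ t₂ : ℝ, 0 ≤ t₁ → t₁ ≤ t₂ →
      f t₂ - f t₁ ≤ C * ∫ t in t₁..t₂, (f t ^ p + f t ^ q))
    (n : ℕ) :
    ∀ a b : ℝ, 0 ≤ a → a ≤ b → b - a ≤ n * (1 / (4 * C)) →
      (∀ s ∈ Set.Icc a b, f s ≤ 1) → ∀ s ∈ Set.Icc a b, f s ≤ 2 ^ n * f a := by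
  have hh : (0:ℝ) < 1 / (4 * C) := by positivity
  induction n with
  | zero =>
      intro a b ha hab hlen hle1 s hs
      have hba : b = a := by simp at hlen; linarith
      have hsa : s = a := le_antisymm (hba ▸ hs.2) hs.1
      simp [hsa]
  | succ n ih =>
      intro a b ha hab hlen hle1 s hs
      set c := min (a + n * (1 / (4 * C))) b with hc
      have hac : a ≤ c := le_min (le_add_of_nonneg_right (by positivity)) hab
      have hcb : c ≤ b := min_le_right _ _
      have hca : c - a ≤ n * (1 / (4 * C)) := by
        have := min_le_left (a + n * (1 / (4 * C))) b
        linarith [this.trans_eq rfl]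
      have hbc : b - c ≤ 1 / (4 * C) := by
        rcases le_or_gt (a + n * (1 / (4 * C))) b with h' | h'
        · have hceq : c = a + n * (1 / (4 * C)) := min_eq_left h'
          push_cast at hlen
          rw [hceq]; linarith
        · have hceq : c = b := min_eq_right h'.le
          rw [hceq]; linarith
      have hfc : f c ≤ 2 ^ n * f a :=
        ih a c ha hac hca (fun u hu => hle1 u ⟨hu.1, le_trans hu.2 hcb⟩)
          c ⟨hac, le_refl c⟩
      have hfa0 : 0 ≤ f a := hf_nonneg a ha
      rcases le_total s c with h' | h'
      · have := ih a c ha hac hca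
          (fun u hu => hle1 u ⟨hu.1, le_trans hu.2 hcb⟩) s ⟨hs.1, h'⟩
        calc f s ≤ 2 ^ n * f a := this
          _ ≤ 2 ^ (n + 1) * f a := by
              apply mul_le_mul_of_nonneg_right _ hfa0
              exact pow_le_pow_right₀ (by norm_num) (Nat.le_succ n)
      · have hdb := aux_double hf_cont hf_nonneg hC hp hq hineq
          (le_trans ha hac) hcb hbc
          (fun u hu => hle1 u ⟨le_trans hac hu.1, hu.2⟩) s ⟨h', hs.2⟩
        calc f s ≤ 2 * f c := hdb
          _ ≤ 2 * (2 ^ n * f a) := by linarith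
          _ = 2 ^ (n + 1) * f a := by ring

lemma aux_main (hf_cont : ContinuousOn f (Set.Ici 0))
    (hf_nonneg : ∀ t : ℝ, 0 ≤ t → 0 ≤ f t)
    (hC : 0 < C) (hp : 1 ≤ p) (hq : 1 ≤ q)
    (hineq : ∀ t₁ t₂ : ℝ, 0 ≤ t₁ → t₁ ≤ t₂ →
      f t₂ - f t₁ ≤ C * ∫ t in t₁..t₂, (f t ^ p + f t ^ q))
    (n : ℕ) {ε : ℝ} (hε : 0 < ε) (hε1 : ε ≤ 1)
    {a b : ℝ} (ha : 0 ≤ a) (hab : a ≤ b) (hlen : b - a ≤ n * (1 / (4 * C)))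
    (hfa : f a ≤ ε / 2 ^ (n + 1)) :
    ∀ s ∈ Set.Icc a b, f s ≤ ε := by
  intro s hs
  by_contra hcon
  push_neg at hcon
  have hpow2 : (0:ℝ) < 2 ^ (n + 1) := by positivity
  have hfa' : f a < ε := by
    have : ε / 2 ^ (n + 1) < ε :=
      div_lt_self hε (one_lt_pow₀ (by norm_num) (Nat.succ_ne_zero n))
    linarith
  have has : a ≤ s := hs.1
  have hcont : ContinuousOn f (Set.Icc a s) :=
    hf_cont.mono (fun x hx => le_trans ha hx.1)
  have hivt : ε ∈ f '' Set.Icc a s :=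
    intermediate_value_Icc has hcont ⟨hfa'.le, hcon.le⟩
  set S := Set.Icc a s ∩ f ⁻¹' {ε} with hS
  have hS_ne : S.Nonempty := by
    obtain ⟨u, hu, hfu⟩ := hivt; exact ⟨u, hu, hfu⟩
  have hS_closed : IsClosed S :=
    hcont.preimage_isClosed_of_isClosed isClosed_Icc isClosed_singleton
  have hS_bdd : BddBelow S := ⟨a, fun x hx => hx.1.1⟩
  set u₀ := sInf S with hu₀
  have hu₀S : u₀ ∈ S := hS_closed.csInf_mem hS_ne hS_bdd
  have hu₀min : ∀ u ∈ S, u₀ ≤ u := fun u hu => csInf_le hS_bdd hu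
  have hfu₀ : f u₀ = ε := hu₀S.2
  have hεle : ∀ u ∈ Set.Icc a u₀, f u ≤ ε := by
    intro u hu
    by_contra h'
    push_neg at h'
    have hus : u ≤ s := le_trans hu.2 hu₀S.1.2
    have hivt2 : ε ∈ f '' Set.Icc a u :=
      intermediate_value_Icc hu.1
        (hcont.mono (Set.Icc_subset_Icc_right hus)) ⟨hfa'.le, h'.le⟩
    obtain ⟨v, hv, hfv⟩ := hivt2
    have hvS : v ∈ S := ⟨⟨hv.1, le_trans hv.2 hus⟩, hfv⟩
    have h1 : u₀ ≤ v := hu₀min v hvS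
    have h2 : v ≤ u := hv.2
    have h3 : u ≤ u₀ := hu.2
    have : v = u := le_antisymm h2 (by linarith)
    rw [this] at hfv
    linarith
  have hle1 : ∀ u ∈ Set.Icc a u₀, f u ≤ 1 := fun u hu =>
    le_trans (hεle u hu) hε1
  have hlen2 : u₀ - a ≤ n * (1 / (4 * C)) := by
    have := hu₀S.1.2; linarith [hs.2]
  have := aux_iter hf_cont hf_nonneg hC hp hq hineq n a u₀ ha hu₀S.1.1
    hlen2 hle1 u₀ ⟨hu₀S.1.1, le_refl u₀⟩
  rw [hfu₀] at this
  have h2 : (2:ℝ) ^ n * (ε / 2 ^ (n + 1)) = ε / 2 := by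
    rw [pow_succ]; field_simp
  have : ε ≤ ε / 2 := by
    calc ε ≤ 2 ^ n * f a := this
      _ ≤ 2 ^ n * (ε / 2 ^ (n + 1)) := by
          apply mul_le_mul_of_nonneg_left hfa (by positivity)
      _ = ε / 2 := h2
  linarith

end aux

/-- Convergence part of the general blow-up/convergence lemma:
if `f` is continuous nonnegative on `[0,∞)`, satisfies the integral growth
inequality with `C > 0`, `1 ≤ p < q < ∞`, and there is a sequence
`t_j ↗ ∞` with bounded gaps and `f(t_j) → 0`, then `f(t) → 0` as `t → ∞`. -/
theorem convergence_lemma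
    (f : ℝ → ℝ) (C p q : ℝ)
    (hf_cont : ContinuousOn f (Set.Ici 0))
    (hf_nonneg : ∀ t : ℝ, 0 ≤ t → 0 ≤ f t)
    (hC : 0 < C) (hp : 1 ≤ p) (hpq : p < q)
    (hineq : ∀ t₁ t₂ : ℝ, 0 ≤ t₁ → t₁ ≤ t₂ →
      f t₂ - f t₁ ≤ C * ∫ t in t₁..t₂, (f t ^ p + f t ^ q))
    (t : ℕ → ℝ) (ht0 : ∀ j, 0 ≤ t j) (htmono : Monotone t)
    (httop : Tendsto t atTop atTop)
    (hgap : ∃ r : ℝ, ∀ᶠ j in atTop, t (j + 1) - t j ≤ r)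
    (hfto : Tendsto (fun j => f (t j)) atTop (𝓝 0)) :
    Tendsto f atTop (𝓝 0) := by
  have hq : 1 ≤ q := le_of_lt (lt_of_le_of_lt hp hpq)
  have hh : (0:ℝ) < 1 / (4 * C) := by positivity
  obtain ⟨r, hr⟩ := hgap
  rw [Metric.tendsto_atTop]
  intro ε hε
  set ε' := min (ε / 2) 1 with hε'def
  have hε'pos : 0 < ε' := lt_min (by linarith) one_pos
  have hε'1 : ε' ≤ 1 := min_le_right _ _
  have hε'ε : ε' < ε := lt_of_le_of_lt (min_le_left _ _) (by linarith)
  obtain ⟨n, hn⟩ := exists_nat_ge (r / (1 / (4 * C)))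
  have hrn : r ≤ n * (1 / (4 * C)) := by
    rw [div_le_iff₀ hh] at hn; linarith
  set δ := ε' / 2 ^ (n + 1) with hδdef
  have hδpos : 0 < δ := by positivity
  have h1 : ∀ᶠ j in atTop, f (t j) ≤ δ := by
    have := Metric.tendsto_atTop.mp hfto δ hδpos
    obtain ⟨N, hN⟩ := this
    filter_upwards [eventually_ge_atTop N] with j hj
    have := hN j hj
    rw [Real.dist_eq, sub_zero] at this
    exact le_of_lt (lt_of_le_of_lt (le_abs_self _) this)
  obtain ⟨J, hJ⟩ := eventually_atTop.mp (h1.and hr)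
  refine ⟨t J, fun x hx => ?_⟩
  -- find j ≥ J with t j ≤ x < t (j+1)
  have hex : ∃ k, x < t (J + k + 1) := by
    obtain ⟨m, hm⟩ := eventually_atTop.mp (httop.eventually_gt_atTop x)
    exact ⟨m, hm (J + m + 1) (by omega)⟩
  set k₀ := Nat.find hex with hk₀
  set j := J + k₀ with hj
  have hxlt : x < t (j + 1) := Nat.find_spec hex
  have htjx : t j ≤ x := by
    rcases Nat.eq_zero_or_pos k₀ with h0 | h0
    · rw [hj, h0]; simpa using hx
    · obtain ⟨k, hk⟩ := Nat.exists_eq_succ_of_ne_zero h0.ne'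
      have := Nat.find_min hex (m := k) (by omega)
      push_neg at this
      have hje : J + k + 1 = j := by omega
      rwa [hje] at this
  have hjJ : J ≤ j := by omega
  obtain ⟨hδj, hrj⟩ := hJ j hjJ
  have hlen : t (j + 1) - t j ≤ n * (1 / (4 * C)) := le_trans hrj hrn
  have hmain := aux_main hf_cont hf_nonneg hC hp hq hineq n hε'pos hε'1
    (ht0 j) (htmono (Nat.le_succ j)) hlen hδj x ⟨htjx, hxlt.le⟩
  have hx0 : 0 ≤ x := le_trans (ht0 j) htjx
  rw [Real.dist_eq, sub_zero, abs_of_nonneg (hf_nonneg x hx0)]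
  exact lt_of_le_of_lt hmain hε'ε
end

section
/- For the borderline elastica with curvature k_b(s) = 2 sech s and tangential angle θ_b(s) = 4 arctan(e^s), the total adapted energy equals 8, i.e., ∫_ℝ ( (1/2) k_b(s)² + 1 - cos θ_b(s) ) ds = 8. -/
open Real MeasureTheory Set

lemma tanh_hasDerivAt (x : ℝ) : HasDerivAt Real.tanh (1 / Real.cosh x ^ 2) x := by
  have h : HasDerivAt (fun y => Real.sinh y / Real.cosh y)
      ((Real.cosh x * Real.cosh x - Real.sinh x * Real.sinh x) / Real.cosh x ^ 2) x :=
    (Real.hasDerivAt_sinh x).div (Real.hasDerivAt_cosh x) (Real.cosh_pos x).ne'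
  have heq : Real.tanh = fun y => Real.sinh y / Real.cosh y := by
    funext y; exact Real.tanh_eq_sinh_div_cosh y
  rw [heq]
  convert h using 2
  rw [← sq, ← sq]
  exact (Real.cosh_sq_sub_sinh_sq x).symm

lemma cosh_ge_half_exp (x : ℝ) : Real.exp x / 2 ≤ Real.cosh x := by
  rw [Real.cosh_eq]
  have := Real.exp_pos (-x)
  linarith

lemma sech_sq_bound {x : ℝ} (hx : 0 ≤ x) :
    1 / Real.cosh x ^ 2 ≤ 4 * Real.exp (-2 * x) := by
  have h1 : Real.exp x / 2 ≤ Real.cosh x := cosh_ge_half_exp x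
  have h2 : Real.exp x ^ 2 / 4 ≤ Real.cosh x ^ 2 := by nlinarith [Real.exp_pos x]
  have h3 : Real.exp (-2 * x) * (Real.exp x * Real.exp x) = 1 := by
    rw [← Real.exp_add, ← Real.exp_add, show -2 * x + (x + x) = 0 by ring, Real.exp_zero]
  rw [div_le_iff₀ (by positivity)]
  nlinarith [mul_le_mul_of_nonneg_left h2 (le_of_lt (Real.exp_pos (-2 * x))), Real.exp_pos x]

lemma sech_even (x : ℝ) : 1 / Real.cosh (-x) ^ 2 = 1 / Real.cosh x ^ 2 := by
  rw [Real.cosh_neg]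

lemma sech_integrableOn_Ioi : IntegrableOn (fun x : ℝ => 1 / Real.cosh x ^ 2) (Ioi 0) := by
  apply Integrable.mono' ((exp_neg_integrableOn_Ioi 0 (by norm_num : (0:ℝ) < 2)).const_mul 4)
  · exact (continuous_const.div (Real.continuous_cosh.pow 2)
      (fun x => (pow_pos (Real.cosh_pos x) 2).ne')).aestronglyMeasurable.restrict
  · rw [ae_restrict_iff' measurableSet_Ioi]
    filter_upwards with x hx
    rw [Real.norm_eq_abs, abs_of_nonneg (by positivity)]
    exact sech_sq_bound (le_of_lt hx)

lemma sech_integrable : Integrable (fun s : ℝ => 1 / Real.cosh s ^ 2) := by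
  have hIic : IntegrableOn (fun x : ℝ => 1 / Real.cosh x ^ 2) (Iic 0) := by
    rw [IntegrableOn, ← Measure.map_neg_eq_self (volume : Measure ℝ)]
    have m : MeasurableEmbedding fun x : ℝ => -x := (Homeomorph.neg ℝ).measurableEmbedding
    rw [Measure.restrict_map m.measurable (measurableSet_Iic), m.integrable_map_iff]
    simp only [Function.comp_def, Real.cosh_neg, neg_preimage, neg_Iic, neg_zero]
    exact Iff.mpr integrableOn_Ici_iff_integrableOn_Ioi sech_integrableOn_Ioi
  have := hIic.union sech_integrableOn_Ioi
  rwa [Iic_union_Ioi, integrableOn_univ] at this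

lemma pointwise_eq (s : ℝ) :
    (1 / 2) * (2 / Real.cosh s) ^ 2 + (1 - Real.cos (4 * Real.arctan (Real.exp s)))
      = 4 * (1 / Real.cosh s ^ 2) := by
  have hc := Real.cosh_pos s
  have key : Real.sin (2 * Real.arctan (Real.exp s)) = 1 / Real.cosh s := by
    rw [Real.sin_two_mul, Real.sin_arctan, Real.cos_arctan, Real.cosh_eq]
    have h1 : Real.sqrt (1 + Real.exp s ^ 2) > 0 := by positivity
    have h2 : Real.sqrt (1 + Real.exp s ^ 2) ^ 2 = 1 + Real.exp s ^ 2 := by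
      rw [Real.sq_sqrt]; positivity
    have h3 : Real.exp (-s) * Real.exp s = 1 := by rw [← Real.exp_add]; simp
    have hp := Real.exp_pos s
    have hq := Real.exp_pos (-s)
    field_simp
    nlinarith
  have h4 : (4 : ℝ) * Real.arctan (Real.exp s) = 2 * (2 * Real.arctan (Real.exp s)) := by ring
  rw [h4, Real.cos_two_mul]
  have h5 : Real.sin (2 * Real.arctan (Real.exp s)) ^ 2
      + Real.cos (2 * Real.arctan (Real.exp s)) ^ 2 = 1 := Real.sin_sq_add_cos_sq _
  have hcos : Real.cos (2 * Real.arctan (Real.exp s)) ^ 2 = 1 - (1 / Real.cosh s) ^ 2 := by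
    rw [← key]; linarith
  rw [hcos]
  field_simp
  ring

lemma tanh_tendsto_atTop : Filter.Tendsto Real.tanh Filter.atTop (nhds 1) := by
  have heq : Real.tanh = fun x => (1 - Real.exp ((-2) * x)) / (1 + Real.exp ((-2) * x)) := by
    funext x
    rw [Real.tanh_eq_sinh_div_cosh, Real.sinh_eq, Real.cosh_eq]
    have hp := Real.exp_pos x
    have h3 : Real.exp (-x) * Real.exp x = 1 := by rw [← Real.exp_add]; simp
    have h4 : Real.exp ((-2) * x) = Real.exp (-x) * Real.exp (-x) := by
      rw [← Real.exp_add]; ring_nf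
    rw [h4]
    have hq := Real.exp_pos (-x)
    field_simp
    nlinarith
  rw [heq]
  have h0 : Filter.Tendsto (fun x : ℝ => Real.exp ((-2) * x)) Filter.atTop (nhds 0) :=
    Real.tendsto_exp_atBot.comp
      ((Filter.tendsto_const_mul_atBot_of_neg (show (-2:ℝ) < 0 by norm_num)).2 Filter.tendsto_id)
  have h1 : Filter.Tendsto (fun x : ℝ => (1 : ℝ) - Real.exp ((-2) * x)) Filter.atTop
      (nhds (1 - 0)) := tendsto_const_nhds.sub h0
  have h2 : Filter.Tendsto (fun x : ℝ => (1 : ℝ) + Real.exp ((-2) * x)) Filter.atTop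
      (nhds (1 + 0)) := tendsto_const_nhds.add h0
  have := h1.div h2 (by norm_num)
  change Filter.Tendsto (fun x => ((1:ℝ) - Real.exp ((-2) * x)) / (1 + Real.exp ((-2) * x)))
    Filter.atTop (nhds ((1 - 0) / (1 + 0))) at this
  simpa using this

lemma tanh_tendsto_atBot : Filter.Tendsto Real.tanh Filter.atBot (nhds (-1)) := by
  have h : Filter.Tendsto (fun x : ℝ => Real.tanh (-x)) Filter.atTop (nhds (-1)) := by
    simp only [Real.tanh_neg]
    exact tanh_tendsto_atTop.neg
  have hneg : Filter.Tendsto (Neg.neg : ℝ → ℝ) Filter.atBot Filter.atTop :=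
    Filter.tendsto_neg_atBot_atTop
  have h2 := h.comp hneg
  simp only [Function.comp_def, neg_neg] at h2
  exact h2

/-- The total adapted energy of the borderline elastica equals `8`:
`∫_ℝ ( (1/2) k_b(s)² + 1 - cos θ_b(s) ) ds = 8`, where `k_b(s) = 2 sech s`
and `θ_b(s) = 4 arctan(e^s)`. -/
theorem borderline_energy_eq_eight :
    ∫ s : ℝ, ((1 / 2) * (2 / Real.cosh s) ^ 2
      + (1 - Real.cos (4 * Real.arctan (Real.exp s)))) = 8 := by
  have heq : (fun s : ℝ => (1 / 2) * (2 / Real.cosh s) ^ 2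
      + (1 - Real.cos (4 * Real.arctan (Real.exp s))))
      = fun s => 4 * (1 / Real.cosh s ^ 2) := by
    funext s; exact pointwise_eq s
  rw [heq]
  have hderiv : ∀ x : ℝ, HasDerivAt (fun y => 4 * Real.tanh y) (4 * (1 / Real.cosh x ^ 2)) x :=
    fun x => (tanh_hasDerivAt x).const_mul 4
  have hint : Integrable (fun x : ℝ => 4 * (1 / Real.cosh x ^ 2)) := sech_integrable.const_mul 4
  have hbot : Filter.Tendsto (fun y => 4 * Real.tanh y) Filter.atBot (nhds (4 * (-1))) :=
    tanh_tendsto_atBot.const_mul 4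
  have htop : Filter.Tendsto (fun y => 4 * Real.tanh y) Filter.atTop (nhds (4 * 1)) :=
    tanh_tendsto_atTop.const_mul 4
  have := MeasureTheory.integral_of_hasDerivAt_of_tendsto hderiv hint hbot htop
  rw [this]; norm_num
end

section
/- Let θ : ℝ → ℝ be a C¹ function with θ(s) → 0 as s → -∞ and θ(s) → 2πN as s → ∞ for some integer N, and with θ' ∈ L²(ℝ) and 1 - cos θ ∈ L¹(ℝ). Then ∫_ℝ ( (1/2) θ'(s)² + 1 - cos θ(s) ) ds ≥ 8|N|. -/
open Real MeasureTheory Filter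
open scoped Topology

private lemma aux_f_cont : Continuous (fun x : ℝ => 2 * |Real.sin (x / 2)|) := by
  continuity

private lemma aux_F_int8 : (∫ t in (0:ℝ)..(2 * Real.pi), 2 * |Real.sin (t / 2)|) = 8 := by
  have h : ∀ t ∈ Set.uIcc (0:ℝ) (2 * Real.pi),
      2 * |Real.sin (t / 2)| = 2 * Real.sin (t / 2) := by
    intro t ht
    rw [Set.uIcc_of_le (by positivity)] at ht
    rw [abs_of_nonneg (Real.sin_nonneg_of_nonneg_of_le_pi (by linarith [ht.1]) (by linarith [ht.2]))]
  rw [intervalIntegral.integral_congr h]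
  have : (∫ t in (0:ℝ)..(2 * Real.pi), 2 * Real.sin (t / 2))
      = 2 * ∫ t in (0:ℝ)..(2 * Real.pi), Real.sin (t / 2) := by
    rw [intervalIntegral.integral_const_mul]
  rw [this, intervalIntegral.integral_comp_div (fun x => Real.sin x) (by norm_num)]
  simp [integral_sin, Real.cos_pi]
  norm_num

/-- Energy lower bound in terms of the rotation number: if the tangential angle
`θ` is `C¹`, `θ → 0` at `-∞`, `θ → 2πN` at `+∞`, `θ' ∈ L²` and `1 - cos θ ∈ L¹`,
then `∫_ℝ ( (1/2) θ'² + 1 - cos θ ) ds ≥ 8|N|`. -/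
theorem energy_ge_eight_rotation (θ : ℝ → ℝ) (N : ℤ)
    (hθ : ContDiff ℝ 1 θ)
    (hbot : Tendsto θ atBot (𝓝 0))
    (htop : Tendsto θ atTop (𝓝 (2 * Real.pi * N)))
    (hL2 : Integrable (fun s => deriv θ s ^ 2))
    (hL1 : Integrable (fun s => 1 - Real.cos (θ s))) :
    8 * |(N : ℝ)| ≤ ∫ s : ℝ, ((1 / 2) * deriv θ s ^ 2 + (1 - Real.cos (θ s))) := by
  set f : ℝ → ℝ := fun x => 2 * |Real.sin (x / 2)| with hf
  have hfcont : Continuous f := aux_f_cont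
  set F : ℝ → ℝ := fun x => ∫ t in (0:ℝ)..x, f t with hF
  have hFcont : Continuous F := by
    exact intervalIntegral.continuous_primitive (fun a b => hfcont.intervalIntegrable a b) 0
  have hFderiv : ∀ x, HasDerivAt F (f x) x := fun x =>
    (intervalIntegral.integral_hasStrictDerivAt_right
      (hfcont.intervalIntegrable 0 x)
      (hfcont.stronglyMeasurableAtFilter _ _) hfcont.continuousAt).hasDerivAt
  have hθdiff : ∀ s, HasDerivAt θ (deriv θ s) s := fun s =>
    (hθ.differentiable one_ne_zero s).hasDerivAt
  set g : ℝ → ℝ := fun s => F (θ s) with hg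
  have hgderiv : ∀ s, HasDerivAt g (f (θ s) * deriv θ s) s := fun s =>
    (hFderiv (θ s)).comp s (hθdiff s)
  -- the energy density
  set E : ℝ → ℝ := fun s => (1 / 2) * deriv θ s ^ 2 + (1 - Real.cos (θ s)) with hE
  have hEint : Integrable E := (hL2.const_mul (1 / 2)).add hL1
  -- pointwise bound
  have hbound : ∀ s, |f (θ s) * deriv θ s| ≤ E s := by
    intro s
    have h1 : Real.sin (θ s / 2) ^ 2 = 1 / 2 - Real.cos (2 * (θ s / 2)) / 2 :=
      Real.sin_sq_eq_half_sub _
    rw [show 2 * (θ s / 2) = θ s by ring] at h1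
    have h2 : |f (θ s) * deriv θ s| = 2 * |Real.sin (θ s / 2)| * |deriv θ s| := by
      rw [abs_mul, hf]; rw [abs_of_nonneg (by positivity)]
    rw [h2, hE]
    have h3 := sq_abs (Real.sin (θ s / 2))
    have h4 := sq_abs (deriv θ s)
    nlinarith [sq_nonneg (|deriv θ s| - 2 * |Real.sin (θ s / 2)|)]
  -- g' integrable
  have hg'cont : Continuous (fun s => f (θ s) * deriv θ s) :=
    (hfcont.comp hθ.continuous).mul (hθ.continuous_deriv le_rfl)
  have hg'int : Integrable (fun s => f (θ s) * deriv θ s) := by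
    refine hEint.mono' hg'cont.aestronglyMeasurable ?_
    filter_upwards with s
    rw [Real.norm_eq_abs]; exact hbound s
  -- limits of g
  have hgbot : Tendsto g atBot (𝓝 (F 0)) := (hFcont.tendsto 0).comp hbot
  have hgtop : Tendsto g atTop (𝓝 (F (2 * Real.pi * N))) :=
    (hFcont.tendsto _).comp htop
  have hint : (∫ s : ℝ, f (θ s) * deriv θ s) = F (2 * Real.pi * N) - F 0 :=
    integral_of_hasDerivAt_of_tendsto hgderiv hg'int hgbot hgtop
  have hF0 : F 0 = 0 := intervalIntegral.integral_same
  -- compute F (2πN) = 8 N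
  have hper : Function.Periodic f (2 * Real.pi) := by
    intro x
    simp only [hf]
    rw [add_div, show (2 * Real.pi) / 2 = Real.pi by ring, Real.sin_add_pi, abs_neg]
  have hFN : F (2 * Real.pi * N) = 8 * N := by
    have := hper.intervalIntegral_add_zsmul_eq N 0
      (fun a b => hfcont.intervalIntegrable a b)
    rw [zero_add, zero_add] at this
    have he : (2 * Real.pi * N : ℝ) = (N : ℤ) • (2 * Real.pi) := by
      rw [zsmul_eq_mul]; ring
    rw [he]
    show (∫ t in (0:ℝ)..((N:ℤ) • (2 * Real.pi)), f t) = 8 * N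
    rw [this, aux_F_int8, zsmul_eq_mul]
    ring
  -- conclude
  have habs : |∫ s : ℝ, f (θ s) * deriv θ s| = 8 * |(N : ℝ)| := by
    rw [hint, hF0, sub_zero, hFN, abs_mul, abs_of_nonneg (by norm_num : (8:ℝ) ≥ 0)]
  calc 8 * |(N : ℝ)| = |∫ s : ℝ, f (θ s) * deriv θ s| := habs.symm
    _ ≤ ∫ s : ℝ, |f (θ s) * deriv θ s| := by
        have h := norm_integral_le_integral_norm (μ := volume) (fun s => f (θ s) * deriv θ s)
        simp only [Real.norm_eq_abs] at h
        exact h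
    _ ≤ ∫ s : ℝ, E s := integral_mono hg'int.abs hEint (fun s => hbound s)
end

section
/- Let γ : ℝ → ℝⁿ be a C¹ immersion parametrized with positive speed |γ'(x)| ≥ c > 0 such that the direction energy D[γ] = ∫_ℝ (|γ'(x)| - ⟨γ'(x), e₁⟩) dx is finite. Then ⟨γ(x), e₁⟩ → +∞ as x → +∞ and ⟨γ(x), e₁⟩ → -∞ as x → -∞; in particular γ is a proper map. -/
open MeasureTheory Filter
open scoped Topology

/-- If `γ : ℝ → ℝⁿ` is a `C¹` immersion with speed bounded below by `c > 0` and
finite direction energy `D[γ] = ∫ (|γ'| - ⟨γ', e₁⟩) dx < ∞`, then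
`⟨γ(x), e₁⟩ → ±∞` as `x → ±∞`; in particular `γ` is proper. -/
theorem direction_energy_horizontal
    (n : ℕ) (hn : 0 < n) (γ : ℝ → EuclideanSpace ℝ (Fin n)) (c : ℝ)
    (hγ : ContDiff ℝ 1 γ) (hc : 0 < c) (hspeed : ∀ x, c ≤ ‖deriv γ x‖)
    (hD : Integrable (fun x =>
      ‖deriv γ x‖ -
        (inner ℝ (deriv γ x) (EuclideanSpace.single (⟨0, hn⟩ : Fin n) (1:ℝ)) : ℝ))) :
    Tendsto (fun x =>
        (inner ℝ (γ x) (EuclideanSpace.single (⟨0, hn⟩ : Fin n) (1:ℝ)) : ℝ))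
        atTop atTop ∧
    Tendsto (fun x =>
        (inner ℝ (γ x) (EuclideanSpace.single (⟨0, hn⟩ : Fin n) (1:ℝ)) : ℝ))
        atBot atBot ∧
    Tendsto γ (cocompact ℝ) (cocompact (EuclideanSpace ℝ (Fin n))) := by
  set e : EuclideanSpace ℝ (Fin n) := EuclideanSpace.single (⟨0, hn⟩ : Fin n) (1:ℝ) with he
  have hnorme : ‖e‖ = 1 := by simp [he]
  set f : ℝ → ℝ := fun x => (inner ℝ (γ x) e : ℝ) with hf
  set g : ℝ → ℝ := fun x => ‖deriv γ x‖ - (inner ℝ (deriv γ x) e : ℝ) with hg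
  set I : ℝ := ∫ x, g x with hI
  have hγ' : Continuous (deriv γ) := (hγ.continuous_deriv le_rfl)
  have hcont1 : Continuous fun x => (inner ℝ (deriv γ x) e : ℝ) :=
    (continuous_inner.comp (hγ'.prodMk continuous_const))
  have hcontn : Continuous fun x => ‖deriv γ x‖ := hγ'.norm
  have hgcont : Continuous g := hcontn.sub hcont1
  have hgnonneg : ∀ x, 0 ≤ g x := by
    intro x
    have := real_inner_le_norm (deriv γ x) e
    rw [hnorme, mul_one] at this
    simpa [hg] using sub_nonneg.mpr this
  -- derivative of f
  have hderiv : ∀ x, HasDerivAt f ((inner ℝ (deriv γ x) e : ℝ)) x := by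
    intro x
    have h1 : HasDerivAt γ (deriv γ x) x :=
      (hγ.differentiable one_ne_zero x).hasDerivAt
    have h2 : HasDerivAt (fun x => (inner ℝ e (γ x) : ℝ)) ((inner ℝ e (deriv γ x) : ℝ)) x := by
      simpa only [innerSL_apply_apply, Function.comp_def] using
        (innerSL ℝ e).hasFDerivAt.comp_hasDerivAt x h1
    have hfe : f = fun x => (inner ℝ e (γ x) : ℝ) := funext fun x => real_inner_comm _ _
    rw [hfe, real_inner_comm]
    exact h2
  -- fundamental estimate
  have key : ∀ a b : ℝ, a ≤ b → f a + c * (b - a) - I ≤ f b := by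
    intro a b hab
    have hfi : IntervalIntegrable (fun x => (inner ℝ (deriv γ x) e : ℝ)) volume a b :=
      hcont1.intervalIntegrable a b
    have hni : IntervalIntegrable (fun x => ‖deriv γ x‖) volume a b :=
      hcontn.intervalIntegrable a b
    have hgi : IntervalIntegrable g volume a b := hgcont.intervalIntegrable a b
    have hftc : ∫ x in a..b, (inner ℝ (deriv γ x) e : ℝ) = f b - f a :=
      intervalIntegral.integral_eq_sub_of_hasDerivAt (fun x _ => hderiv x) hfi
    have hsplit : ∫ x in a..b, (inner ℝ (deriv γ x) e : ℝ)
        = (∫ x in a..b, ‖deriv γ x‖) - ∫ x in a..b, g x := by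
      rw [← intervalIntegral.integral_sub hni hgi]
      congr 1 with x
      simp [hg]
    have hlow : c * (b - a) ≤ ∫ x in a..b, ‖deriv γ x‖ := by
      have := intervalIntegral.integral_mono_on hab
        (intervalIntegrable_const (c := c)) hni (fun x _ => hspeed x)
      simpa [mul_comm] using this
    have hup : ∫ x in a..b, g x ≤ I := by
      rw [intervalIntegral.integral_of_le hab]
      exact setIntegral_le_integral hD (Eventually.of_forall hgnonneg)
    have : c * (b - a) - I ≤ f b - f a := by
      rw [← hftc, hsplit]; linarith
    linarith
  have h1 : Tendsto f atTop atTop := by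
    have hlin : Tendsto (fun x : ℝ => f 0 + c * x - I) atTop atTop := by
      have hm : Tendsto (fun x : ℝ => c * x) atTop atTop :=
        Tendsto.const_mul_atTop hc tendsto_id
      have := tendsto_atTop_add_const_right atTop (f 0 - I) hm
      refine this.congr fun x => by ring
    refine tendsto_atTop_mono' atTop ?_ hlin
    filter_upwards [eventually_ge_atTop (0:ℝ)] with x hx
    have := key 0 x hx
    linarith
  have h2 : Tendsto f atBot atBot := by
    have hlin : Tendsto (fun x : ℝ => f 0 + I + c * x) atBot atBot := by
      have hm : Tendsto (fun x : ℝ => c * x) atBot atBot :=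
        Tendsto.const_mul_atBot hc tendsto_id
      have := tendsto_atBot_add_const_right atBot (f 0 + I) hm
      refine this.congr fun x => by ring
    refine tendsto_atBot_mono' atBot ?_ hlin
    filter_upwards [eventually_le_atBot (0:ℝ)] with x hx
    have := key x 0 hx
    linarith
  refine ⟨h1, h2, ?_⟩
  have habs : ∀ x, |f x| ≤ ‖γ x‖ := by
    intro x
    have := abs_real_inner_le_norm (γ x) e
    simpa [hf, hnorme] using this
  have hnt : Tendsto (fun x => ‖γ x‖) atTop atTop :=
    tendsto_atTop_mono habs (tendsto_abs_atTop_atTop.comp h1)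
  have hnb : Tendsto (fun x => ‖γ x‖) atBot atTop :=
    tendsto_atTop_mono habs (tendsto_abs_atBot_atTop.comp h2)
  rw [cocompact_eq_atBot_atTop, tendsto_sup]
  constructor <;>
    [exact tendsto_cocompact_of_tendsto_dist_comp_atTop 0 (by simpa [dist_zero_right] using hnb);
     exact tendsto_cocompact_of_tendsto_dist_comp_atTop 0 (by simpa [dist_zero_right] using hnt)]
end

section
/- Let ξ ∈ C_c^∞(ℝ) with ξ ≥ 0 and |ξ'| ≤ Λ, let r ≥ 0, and let u ∈ W^{1,2}_loc(ℝ). Then there is C = C(Λ, r) > 0 such that ‖ξ^{r+1/2} u‖_∞² ≤ C ( ∫ |u'|² ξ^{2r+2} dx )^{1/2} ( ∫ |u|² ξ^{2r} dx )^{1/2} + C ∫ |u|² ξ^{2r} dx. -/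
open MeasureTheory Filter
open scoped Topology ENNReal

/-- Weighted Agmon-type (L∞ Gagliardo–Nirenberg) estimate on the real line:
for a smooth nonnegative compactly supported weight `ξ` with `|ξ'| ≤ Λ`, `r ≥ 0`,
and `u` weakly differentiable, `‖ξ^{r+1/2} u‖_∞²` is bounded by
`C (∫ |u'|² ξ^{2r+2})^{1/2} (∫ |u|² ξ^{2r})^{1/2} + C ∫ |u|² ξ^{2r}`
with `C = C(Λ, r)`. -/
theorem weighted_agmon (Λ r : ℝ) (hΛ : 0 ≤ Λ) (hr : 0 ≤ r) :
    ∃ C > (0:ℝ), ∀ ξ u : ℝ → ℝ,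
      ContDiff ℝ (⊤ : ℕ∞) ξ → HasCompactSupport ξ → (∀ x, 0 ≤ ξ x) →
      (∀ x, |deriv ξ x| ≤ Λ) → Differentiable ℝ u →
      (⨆ x : ℝ, ENNReal.ofReal (ξ x ^ (2 * r + 1) * u x ^ 2)) ≤
        ENNReal.ofReal C *
            (∫⁻ x : ℝ, ENNReal.ofReal (deriv u x ^ 2 * ξ x ^ (2 * r + 2))) ^ ((1:ℝ)/2) *
            (∫⁻ x : ℝ, ENNReal.ofReal (u x ^ 2 * ξ x ^ (2 * r))) ^ ((1:ℝ)/2) +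
          ENNReal.ofReal C * ∫⁻ x : ℝ, ENNReal.ofReal (u x ^ 2 * ξ x ^ (2 * r)) := by
  refine ⟨2 + (2*r+1)*Λ + 1, by positivity, ?_⟩
  intro ξ u hξs hξc hξ0 hξΛ hu
  set C : ℝ := 2 + (2*r+1)*Λ + 1 with hCdef
  have hCpos : (0:ℝ) < C := by positivity
  have hu_cont : Continuous u := hu.continuous
  have hξ_cont : Continuous ξ := hξs.continuous
  have hξd_cont : Continuous (deriv ξ) := hξs.continuous_deriv (by simp)
  have hud_m : Measurable (deriv u) := measurable_deriv u
  -- rpow identities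
  have hEA : ∀ x, ξ x ^ (2*r+2) = (ξ x ^ (r+1))^2 := by
    intro x
    rw [show (2*r+2 : ℝ) = (r+1)*2 by ring, Real.rpow_mul (hξ0 x),
      show (2:ℝ) = ((2:ℕ):ℝ) by norm_num, Real.rpow_natCast]
  have hEB : ∀ x, ξ x ^ (2*r) = (ξ x ^ r)^2 := by
    intro x
    rw [show (2*r : ℝ) = r*2 by ring, Real.rpow_mul (hξ0 x),
      show (2:ℝ) = ((2:ℕ):ℝ) by norm_num, Real.rpow_natCast]
  have hEC : ∀ x, ξ x ^ (2*r+1) = ξ x ^ r * ξ x ^ (r+1) := by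
    intro x
    rw [show (2*r+1 : ℝ) = r + (r+1) by ring, Real.rpow_add' (hξ0 x) (by linarith)]
  -- continuity/measurability of weights
  have hcont2r : Continuous (fun x => ξ x ^ (2*r)) :=
    hξ_cont.rpow_const (fun x => Or.inr (by linarith))
  have hcont2r1 : Continuous (fun x => ξ x ^ (2*r+1)) :=
    hξ_cont.rpow_const (fun x => Or.inr (by linarith))
  have hcont2r2 : Continuous (fun x => ξ x ^ (2*r+2)) :=
    hξ_cont.rpow_const (fun x => Or.inr (by linarith))
  have hcontr : Continuous (fun x => ξ x ^ r) :=
    hξ_cont.rpow_const (fun x => Or.inr hr)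
  have hcontr1 : Continuous (fun x => ξ x ^ (r+1)) :=
    hξ_cont.rpow_const (fun x => Or.inr (by linarith))
  set I₁ := ∫⁻ x : ℝ, ENNReal.ofReal (deriv u x ^ 2 * ξ x ^ (2 * r + 2)) with hI1def
  set I₂ := ∫⁻ x : ℝ, ENNReal.ofReal (u x ^ 2 * ξ x ^ (2 * r)) with hI2def
  have hm2 : Measurable (fun x => ENNReal.ofReal (u x ^ 2 * ξ x ^ (2*r))) :=
    ENNReal.measurable_ofReal.comp ((hu_cont.pow 2).mul hcont2r).measurable
  have hm1 : Measurable (fun x => ENNReal.ofReal (deriv u x ^ 2 * ξ x ^ (2*r+2))) :=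
    ENNReal.measurable_ofReal.comp ((hud_m.pow_const 2).mul hcont2r2.measurable)
  by_cases h20 : I₂ = 0
  · -- integrand vanishes a.e. hence everywhere; LHS = 0
    have hae : ∀ᵐ x : ℝ, ENNReal.ofReal (u x ^ 2 * ξ x ^ (2*r)) = 0 :=
      (lintegral_eq_zero_iff hm2).mp h20
    have hae' : (fun x => u x ^ 2 * ξ x ^ (2*r)) =ᵐ[(volume : Measure ℝ)] (fun _ => (0:ℝ)) := by
      filter_upwards [hae] with x hx
      have h0 : 0 ≤ u x ^ 2 * ξ x ^ (2*r) :=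
        mul_nonneg (sq_nonneg _) (Real.rpow_nonneg (hξ0 x) _)
      have := ENNReal.ofReal_eq_zero.mp hx
      linarith
    have hzero : ∀ x, u x ^ 2 * ξ x ^ (2*r) = 0 := by
      have := (Continuous.ae_eq_iff_eq (volume : Measure ℝ)
        ((hu_cont.pow 2).mul hcont2r) continuous_const).mp hae'
      exact fun x => congrFun this x
    have : (⨆ x : ℝ, ENNReal.ofReal (ξ x ^ (2 * r + 1) * u x ^ 2)) = 0 := by
      refine le_antisymm (iSup_le fun x => ?_) (zero_le)
      have hx : ξ x ^ (2*r+1) * u x ^ 2 = 0 := by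
        rcases eq_or_lt_of_le (hξ0 x) with h | h
        · rw [← h, Real.zero_rpow (by linarith), zero_mul]
        · have : ξ x ^ (2*r+1) = ξ x ^ (2*r) * ξ x := by
            rw [show (2*r+1 : ℝ) = 2*r + 1 by ring, Real.rpow_add h, Real.rpow_one]
          have h2 := hzero x
          rw [this]
          nlinarith [hzero x]
      simp [hx]
    rw [this]; exact zero_le
  · -- I₂ ≠ 0
    have hI2half : I₂ ^ ((1:ℝ)/2) ≠ 0 := by
      simp only [ne_eq, ENNReal.rpow_eq_zero_iff, not_or]
      constructor
      · rintro ⟨h, _⟩; exact h20 h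
      · rintro ⟨h, _⟩; norm_num at *
    have hCo : ENNReal.ofReal C ≠ 0 := by simp [ENNReal.ofReal_eq_zero, not_le, hCpos]
    by_cases h2t : I₂ = ⊤
    · have : ENNReal.ofReal C * I₂ = ⊤ := by rw [h2t]; exact ENNReal.mul_top hCo
      rw [this]; simp
    by_cases h1t : I₁ = ⊤
    · have : ENNReal.ofReal C * I₁ ^ ((1:ℝ)/2) * I₂ ^ ((1:ℝ)/2) = ⊤ := by
        rw [h1t, ENNReal.top_rpow_of_pos (by norm_num)]
        rw [ENNReal.mul_top hCo]
        exact ENNReal.top_mul hI2half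
      rw [this]; simp
    · -- main case: both integrals finite
      set g : ℝ → ℝ := fun t => ξ t ^ (2*r+1) * u t ^ 2 with hgdef
      set g' : ℝ → ℝ := fun t =>
        deriv ξ t * (2*r+1) * ξ t ^ (2*r) * u t ^ 2
          + ξ t ^ (2*r+1) * (2 * u t * deriv u t) with hg'def
      have hgderiv : ∀ t, HasDerivAt g (g' t) t := by
        intro t
        have h1 : HasDerivAt (fun t => ξ t ^ (2*r+1))
            (deriv ξ t * (2*r+1) * ξ t ^ (2*r+1-1)) t :=
          ((hξs.differentiable (by simp) t).hasDerivAt).rpow_const (Or.inr (by linarith))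
        have h2 : HasDerivAt (fun t => u t ^ 2) (((2:ℕ):ℝ) * u t ^ (2-1) * deriv u t) t :=
          ((hu t).hasDerivAt).pow 2
        have h3 : HasDerivAt (fun t => ξ t ^ (2*r+1) * u t ^ 2) _ t := h1.mul h2
        convert h3 using 1
        rw [show (2*r+1-1:ℝ) = 2*r by ring]
        push_cast
        ring
      have hg'meas : Measurable g' := by
        apply Measurable.add
        · exact ((hξd_cont.measurable.mul_const _).mul hcont2r.measurable).mul
            ((hu_cont.pow 2).measurable)
        · exact hcont2r1.measurable.mul
            ((measurable_const.mul hu_cont.measurable).mul hud_m)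
      have int1 : Integrable (fun t => deriv u t ^ 2 * ξ t ^ (2*r+2)) := by
        refine ⟨((hud_m.pow_const 2).mul hcont2r2.measurable).aestronglyMeasurable, ?_⟩
        rw [hasFiniteIntegral_iff_ofReal (Eventually.of_forall fun t =>
          mul_nonneg (sq_nonneg _) (Real.rpow_nonneg (hξ0 t) _))]
        rw [← hI1def]
        exact lt_top_iff_ne_top.mpr h1t
      have int2 : Integrable (fun t => u t ^ 2 * ξ t ^ (2*r)) := by
        refine ⟨((hu_cont.pow 2).mul hcont2r).measurable.aestronglyMeasurable, ?_⟩
        rw [hasFiniteIntegral_iff_ofReal (Eventually.of_forall fun t =>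
          mul_nonneg (sq_nonneg _) (Real.rpow_nonneg (hξ0 t) _))]
        rw [← hI2def]
        exact lt_top_iff_ne_top.mpr h2t
      -- pointwise bound on |g'|
      have hptreal : ∀ t, |g' t|
          ≤ 2 * ((|deriv u t| * ξ t ^ (r+1)) * (|u t| * ξ t ^ r))
            + ((2*r+1)*Λ) * (u t ^ 2 * ξ t ^ (2*r)) := by
        intro t
        have hξr := Real.rpow_nonneg (hξ0 t) r
        have hξr1 := Real.rpow_nonneg (hξ0 t) (r+1)
        have hξ2r := Real.rpow_nonneg (hξ0 t) (2*r)
        have t1 : |deriv ξ t * (2*r+1) * ξ t ^ (2*r) * u t ^ 2|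
            ≤ (2*r+1)*Λ * (u t ^ 2 * ξ t ^ (2*r)) := by
          rw [abs_mul, abs_mul, abs_mul,
            abs_of_nonneg (show (0:ℝ) ≤ 2*r+1 by linarith),
            abs_of_nonneg hξ2r, abs_of_nonneg (sq_nonneg (u t))]
          have h := mul_le_mul_of_nonneg_right (hξΛ t)
            (mul_nonneg (mul_nonneg (show (0:ℝ) ≤ 2*r+1 by linarith) hξ2r) (sq_nonneg (u t)))
          calc |deriv ξ t| * (2*r+1) * ξ t ^ (2*r) * u t ^ 2
              = |deriv ξ t| * ((2*r+1) * ξ t ^ (2*r) * u t ^ 2) := by ring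
            _ ≤ Λ * ((2*r+1) * ξ t ^ (2*r) * u t ^ 2) := h
            _ = (2*r+1)*Λ * (u t ^ 2 * ξ t ^ (2*r)) := by ring
        have t2 : |ξ t ^ (2*r+1) * (2 * u t * deriv u t)|
            = 2 * ((|deriv u t| * ξ t ^ (r+1)) * (|u t| * ξ t ^ r)) := by
          rw [hEC t, abs_mul, abs_mul, abs_mul, abs_mul,
            abs_of_nonneg hξr, abs_of_nonneg hξr1,
            abs_of_nonneg (show (0:ℝ) ≤ 2 by norm_num)]
          ring
        calc |g' t| ≤ |deriv ξ t * (2*r+1) * ξ t ^ (2*r) * u t ^ 2|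
              + |ξ t ^ (2*r+1) * (2 * u t * deriv u t)| := abs_add_le _ _
          _ ≤ 2 * ((|deriv u t| * ξ t ^ (r+1)) * (|u t| * ξ t ^ r))
              + ((2*r+1)*Λ) * (u t ^ 2 * ξ t ^ (2*r)) := by rw [t2]; linarith
      have hbound : ∀ t, ‖g' t‖ ≤ deriv u t ^ 2 * ξ t ^ (2*r+2)
          + (1 + (2*r+1)*Λ) * (u t ^ 2 * ξ t ^ (2*r)) := by
        intro t
        have hsq : 2 * (|deriv u t| * ξ t ^ (r+1)) * (|u t| * ξ t ^ r)
            ≤ (|deriv u t| * ξ t ^ (r+1))^2 + (|u t| * ξ t ^ r)^2 :=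
          two_mul_le_add_sq _ _
        have e1 : (|deriv u t| * ξ t ^ (r+1))^2 = deriv u t ^ 2 * ξ t ^ (2*r+2) := by
          rw [mul_pow, sq_abs, hEA t]
        have e2 : (|u t| * ξ t ^ r)^2 = u t ^ 2 * ξ t ^ (2*r) := by
          rw [mul_pow, sq_abs, hEB t]
        have := hptreal t
        rw [Real.norm_eq_abs]
        nlinarith [this, hsq, e1, e2]
      have hg'int : Integrable g' :=
        (int1.add (int2.const_mul _)).mono' hg'meas.aestronglyMeasurable
          (Eventually.of_forall hbound)
      -- FTC: g x ≤ ∫ |g'|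
      obtain ⟨M, hM⟩ := hξc.isBounded.subset_closedBall (0:ℝ)
      set a : ℝ := -(|M|+1) with hadef
      have hξa : ξ a = 0 := by
        apply image_eq_zero_of_notMem_tsupport
        intro hmem
        have h1 := hM hmem
        rw [Metric.mem_closedBall, Real.dist_eq, sub_zero, hadef, abs_neg,
          abs_of_nonneg (by positivity)] at h1
        have := le_abs_self M
        linarith
      have hga : g a = 0 := by
        show ξ a ^ (2*r+1) * u a ^ 2 = 0
        rw [hξa, Real.zero_rpow (by linarith), zero_mul]
      have key : ∀ x, g x ≤ ∫ t, |g' t| := by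
        intro x
        have hfund : ∫ t in a..x, g' t = g x - g a :=
          intervalIntegral.integral_eq_sub_of_hasDerivAt (fun t _ => hgderiv t)
            hg'int.intervalIntegrable
        have h1 : g x = ∫ t in a..x, g' t := by rw [hfund, hga, sub_zero]
        rw [h1]
        calc (∫ t in a..x, g' t) ≤ ‖∫ t in a..x, g' t‖ := le_abs_self _
          _ ≤ ∫ t in Set.uIoc a x, ‖g' t‖ :=
              intervalIntegral.norm_integral_le_integral_norm_uIoc
          _ ≤ ∫ t, ‖g' t‖ := setIntegral_le_integral hg'int.norm
              (Eventually.of_forall fun t => norm_nonneg _)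
          _ = ∫ t, |g' t| := by simp [Real.norm_eq_abs]
      have hsup : (⨆ x : ℝ, ENNReal.ofReal (ξ x ^ (2 * r + 1) * u x ^ 2))
          ≤ ENNReal.ofReal (∫ t, |g' t|) :=
        iSup_le fun x => ENNReal.ofReal_le_ofReal (key x)
      have hKlin : ENNReal.ofReal (∫ t, |g' t|) = ∫⁻ t, ENNReal.ofReal |g' t| :=
        ofReal_integral_eq_lintegral_ofReal hg'int.abs
          (Eventually.of_forall fun t => abs_nonneg _)
      set f₁ : ℝ → ℝ≥0∞ := fun t => ENNReal.ofReal (|deriv u t| * ξ t ^ (r+1)) with hf1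
      set f₂ : ℝ → ℝ≥0∞ := fun t => ENNReal.ofReal (|u t| * ξ t ^ r) with hf2
      have hf1m : Measurable f₁ :=
        ENNReal.measurable_ofReal.comp (hud_m.abs.mul hcontr1.measurable)
      have hf2m : Measurable f₂ :=
        ENNReal.measurable_ofReal.comp (hu_cont.abs.measurable.mul hcontr.measurable)
      have hpoint : ∀ t, ENNReal.ofReal |g' t|
          ≤ 2 * (f₁ t * f₂ t)
            + ENNReal.ofReal ((2*r+1)*Λ) * ENNReal.ofReal (u t ^ 2 * ξ t ^ (2*r)) := by
        intro t
        have hξr := Real.rpow_nonneg (hξ0 t) r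
        have hξr1 := Real.rpow_nonneg (hξ0 t) (r+1)
        refine le_trans (ENNReal.ofReal_le_ofReal (hptreal t)) (le_of_eq ?_)
        rw [ENNReal.ofReal_add
            (mul_nonneg (by norm_num)
              (mul_nonneg (mul_nonneg (abs_nonneg _) hξr1) (mul_nonneg (abs_nonneg _) hξr)))
            (mul_nonneg (mul_nonneg (by linarith) hΛ)
              (mul_nonneg (sq_nonneg _) (Real.rpow_nonneg (hξ0 t) _))),
          ENNReal.ofReal_mul (by norm_num : (0:ℝ) ≤ 2),
          ENNReal.ofReal_mul (mul_nonneg (abs_nonneg _) hξr1),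
          ENNReal.ofReal_mul (mul_nonneg (show (0:ℝ) ≤ 2*r+1 by linarith) hΛ),
          ENNReal.ofReal_ofNat]
      have hH : (∫⁻ t, f₁ t * f₂ t) ≤ I₁ ^ ((1:ℝ)/2) * I₂ ^ ((1:ℝ)/2) := by
        have hconj : (2:ℝ).HolderConjugate 2 := Real.HolderConjugate.two_two
        have := ENNReal.lintegral_mul_le_Lp_mul_Lq volume hconj
          hf1m.aemeasurable hf2m.aemeasurable
        have e1 : ∀ t, f₁ t ^ (2:ℝ) = ENNReal.ofReal (deriv u t ^ 2 * ξ t ^ (2*r+2)) := by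
          intro t
          show ENNReal.ofReal (|deriv u t| * ξ t ^ (r+1)) ^ (2:ℝ) = _
          rw [ENNReal.ofReal_rpow_of_nonneg
            (mul_nonneg (abs_nonneg _) (Real.rpow_nonneg (hξ0 t) _)) (by norm_num : (0:ℝ) ≤ 2)]
          congr 1
          rw [Real.rpow_two, mul_pow, sq_abs, hEA t]
        have e2 : ∀ t, f₂ t ^ (2:ℝ) = ENNReal.ofReal (u t ^ 2 * ξ t ^ (2*r)) := by
          intro t
          show ENNReal.ofReal (|u t| * ξ t ^ r) ^ (2:ℝ) = _
          rw [ENNReal.ofReal_rpow_of_nonneg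
            (mul_nonneg (abs_nonneg _) (Real.rpow_nonneg (hξ0 t) _)) (by norm_num : (0:ℝ) ≤ 2)]
          congr 1
          rw [Real.rpow_two, mul_pow, sq_abs, hEB t]
        simp only [Pi.mul_apply, e1, e2] at this
        rw [hI1def, hI2def]
        exact this
      refine le_trans hsup ?_
      rw [hKlin]
      calc (∫⁻ t, ENNReal.ofReal |g' t|)
          ≤ ∫⁻ t, (2 * (f₁ t * f₂ t)
              + ENNReal.ofReal ((2*r+1)*Λ) * ENNReal.ofReal (u t ^ 2 * ξ t ^ (2*r))) :=
            lintegral_mono hpoint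
        _ = 2 * (∫⁻ t, f₁ t * f₂ t) + ENNReal.ofReal ((2*r+1)*Λ) * I₂ := by
            rw [lintegral_add_left (f := fun t => 2 * (f₁ t * f₂ t)) ((hf1m.mul hf2m).const_mul 2),
              lintegral_const_mul' _ _ (by simp : (2:ℝ≥0∞) ≠ ⊤),
              lintegral_const_mul' _ _ ENNReal.ofReal_ne_top, hI2def]
        _ ≤ 2 * (I₁ ^ ((1:ℝ)/2) * I₂ ^ ((1:ℝ)/2)) + ENNReal.ofReal ((2*r+1)*Λ) * I₂ := by
            gcongr
        _ ≤ ENNReal.ofReal C * I₁ ^ ((1:ℝ)/2) * I₂ ^ ((1:ℝ)/2) + ENNReal.ofReal C * I₂ := by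
            apply add_le_add
            · rw [mul_assoc]
              apply mul_le_mul_left
              rw [show (2:ℝ≥0∞) = ENNReal.ofReal 2 by simp]
              exact ENNReal.ofReal_le_ofReal (by nlinarith)
            · apply mul_le_mul_left
              exact ENNReal.ofReal_le_ofReal (by nlinarith)
end

section
/- Let ξ ∈ C_c^∞(ℝ) with ξ ≥ 0 and |ξ'| ≤ Λ, let r ≥ 0 and p ∈ (2,∞), and set θ = (p-2)/(2p). Then there exists C = C(Λ, p, r) > 0 such that for all u ∈ W^{1,2}_loc(ℝ): ( ∫ |u|^p ξ^{p(r+θ)} dx )^{1/p} ≤ C ( ∫ |u'|² ξ^{2r+2} dx )^{θ/2} ( ∫ |u|² ξ^{2r} dx )^{(1-θ)/2} + C ( ∫ |u|² ξ^{2r} dx )^{1/2}. -/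
open MeasureTheory Filter
open scoped Topology ENNReal

lemma sup_le_integral_deriv (f F' : ℝ → ℝ) (hd : ∀ x, HasDerivAt f (F' x) x)
    (hi : Integrable F') (hsupp : ∃ y₀ : ℝ, ∀ y ≤ y₀, f y = 0) (x : ℝ) :
    f x ≤ ∫ t, |F' t| := by
  obtain ⟨y₀, h0⟩ := hsupp
  set y := min x y₀ with hy
  have hyx : y ≤ x := min_le_left _ _
  have hfy : f y = 0 := h0 y (min_le_right _ _)
  have hftc : ∫ t in y..x, F' t = f x - f y :=
    intervalIntegral.integral_eq_sub_of_hasDerivAt (fun t _ => hd t)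
      (hi.intervalIntegrable)
  have h1 : f x = ∫ t in y..x, F' t := by rw [hftc, hfy, sub_zero]
  calc f x = ∫ t in y..x, F' t := h1
    _ ≤ |∫ t in y..x, F' t| := le_abs_self _
    _ ≤ ∫ t in y..x, |F' t| := by
        simpa [Real.norm_eq_abs] using intervalIntegral.norm_integral_le_integral_norm (f := F') hyx
    _ = ∫ t in Set.Ioc y x, |F' t| := intervalIntegral.integral_of_le hyx
    _ ≤ ∫ t, |F' t| := setIntegral_le_integral hi.abs (Filter.Eventually.of_forall (fun t => abs_nonneg _))

/-- Weighted Gagliardo–Nirenberg interpolation inequality on the real line: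
for `ξ ∈ C_c^∞(ℝ)` nonnegative with `|ξ'| ≤ Λ`, `r ≥ 0`, `p ∈ (2,∞)`,
`θ = (p-2)/(2p)`, and `u` weakly differentiable,
`(∫ |u|^p ξ^{p(r+θ)})^{1/p} ≤ C (∫ |u'|² ξ^{2r+2})^{θ/2} (∫ |u|² ξ^{2r})^{(1-θ)/2}
  + C (∫ |u|² ξ^{2r})^{1/2}` with `C = C(Λ, p, r)`. -/
theorem weighted_gagliardo_nirenberg (Λ r p : ℝ) (hΛ : 0 ≤ Λ) (hr : 0 ≤ r)
    (hp : 2 < p) :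
    ∃ C > (0:ℝ), ∀ ξ u : ℝ → ℝ,
      ContDiff ℝ (⊤ : ℕ∞) ξ → HasCompactSupport ξ → (∀ x, 0 ≤ ξ x) →
      (∀ x, |deriv ξ x| ≤ Λ) → Differentiable ℝ u →
      (∫⁻ x : ℝ,
          ENNReal.ofReal (|u x| ^ p * ξ x ^ (p * (r + (p - 2) / (2 * p))))) ^ (1/p) ≤
        ENNReal.ofReal C *
            (∫⁻ x : ℝ, ENNReal.ofReal (deriv u x ^ 2 * ξ x ^ (2 * r + 2)))
              ^ (((p - 2) / (2 * p)) / 2) *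
            (∫⁻ x : ℝ, ENNReal.ofReal (u x ^ 2 * ξ x ^ (2 * r)))
              ^ ((1 - (p - 2) / (2 * p)) / 2) +
          ENNReal.ofReal C *
            (∫⁻ x : ℝ, ENNReal.ofReal (u x ^ 2 * ξ x ^ (2 * r))) ^ ((1:ℝ)/2) := by
  have hp0 : (0:ℝ) < p := by linarith
  set th : ℝ := (p - 2) / (2 * p) with hth
  have hth0 : 0 < th := div_pos (by linarith) (by linarith)
  have hth1 : th < 1 := by
    rw [hth, div_lt_one (by positivity)]; linarith
  set c : ℝ := (2 * r + 1) * Λ with hc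
  have hc0 : 0 ≤ c := by positivity
  set C : ℝ := 2 + c ^ th with hC
  have hCpos : 0 < C := by positivity
  refine ⟨C, hCpos, ?_⟩
  intro ξ u hξsm hξcs hξ0 hξΛ hu
  set A := ∫⁻ x : ℝ, ENNReal.ofReal (deriv u x ^ 2 * ξ x ^ (2 * r + 2)) with hA
  set B := ∫⁻ x : ℝ, ENNReal.ofReal (u x ^ 2 * ξ x ^ (2 * r)) with hB
  set L := ∫⁻ x : ℝ, ENNReal.ofReal (|u x| ^ p * ξ x ^ (p * (r + th))) with hL
  -- basic regularity
  have hu_c : Continuous u := hu.continuous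
  have hξ_c : Continuous ξ := hξsm.continuous
  have hξ'_c : Continuous (deriv ξ) := hξsm.continuous_deriv (by simp)
  have hcont : ∀ e : ℝ, 0 ≤ e → Continuous (fun x => ξ x ^ e) := fun e he =>
    (Real.continuous_rpow_const he).comp hξ_c
  -- pointwise identity
  have hpt : ∀ x, |u x| ^ p * ξ x ^ (p * (r + th)) =
      (u x ^ 2 * ξ x ^ (2 * r + 1)) ^ ((p - 2) / 2) * (u x ^ 2 * ξ x ^ (2 * r)) := by
    intro x
    have hs : (0:ℝ) ≤ ξ x := hξ0 x
    have ha : (0:ℝ) ≤ |u x| := abs_nonneg _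
    have hq0 : (0:ℝ) < (p - 2) / 2 := by linarith
    have habs : u x ^ 2 = |u x| ^ (2:ℝ) := by
      rw [show ((2:ℝ) = ((2:ℕ):ℝ)) by norm_num, Real.rpow_natCast]
      exact (sq_abs _).symm
    rw [habs,
      Real.mul_rpow (Real.rpow_nonneg ha _) (Real.rpow_nonneg hs _),
      ← Real.rpow_mul ha, ← Real.rpow_mul hs]
    have h1 : |u x| ^ (2 * ((p - 2) / 2)) * ξ x ^ ((2 * r + 1) * ((p - 2) / 2)) *
        (|u x| ^ (2:ℝ) * ξ x ^ (2 * r)) =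
        (|u x| ^ (2 * ((p - 2) / 2)) * |u x| ^ (2:ℝ)) *
        (ξ x ^ ((2 * r + 1) * ((p - 2) / 2)) * ξ x ^ (2 * r)) := by ring
    rw [h1, ← Real.rpow_add' ha (by intro h; nlinarith), ← Real.rpow_add' hs ?hne]
    case hne =>
      have h2 : 0 < (2 * r + 1) * ((p - 2) / 2) := by nlinarith
      intro h; nlinarith
    congr 1
    · congr 1; ring
    · congr 1; rw [hth]; field_simp; ring
  -- measurability of the B integrand
  have hmB : Measurable (fun x => u x ^ 2 * ξ x ^ (2 * r)) :=
    ((hu_c.pow 2).mul (hcont _ (by linarith))).measurable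
  -- case B = 0
  by_cases hB0 : B = 0
  · have hae : (fun x => ENNReal.ofReal (u x ^ 2 * ξ x ^ (2 * r))) =ᵐ[volume] 0 := by
      rw [← lintegral_eq_zero_iff (by exact hmB.ennreal_ofReal)]
      exact hB0
    have hL0 : L = 0 := by
      rw [hL, ← lintegral_zero]
      refine lintegral_congr_ae ?_
      filter_upwards [hae] with x hx
      have hx0 : u x ^ 2 * ξ x ^ (2 * r) = 0 := by
        have h1 : ENNReal.ofReal (u x ^ 2 * ξ x ^ (2 * r)) = 0 := hx
        have h2 : u x ^ 2 * ξ x ^ (2 * r) ≤ 0 := ENNReal.ofReal_eq_zero.mp h1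
        have h3 : 0 ≤ u x ^ 2 * ξ x ^ (2 * r) := mul_nonneg (sq_nonneg _) (Real.rpow_nonneg (hξ0 x) _)
        linarith
      simp [hpt x, hx0]
    rw [hL0, ENNReal.zero_rpow_of_pos (by positivity)]
    exact zero_le
  -- case B = ⊤
  by_cases hBtop : B = ⊤
  · have : ENNReal.ofReal C * B ^ ((1:ℝ)/2) = ⊤ := by
      rw [hBtop, ENNReal.top_rpow_of_pos (by norm_num), ENNReal.mul_top]
      simp [ENNReal.ofReal_eq_zero, not_le, hCpos]
    rw [this]; simp
  -- case A = ⊤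
  by_cases hAtop : A = ⊤
  · have h1 : ENNReal.ofReal C * A ^ (th/2) * B ^ ((1 - th)/2) = ⊤ := by
      rw [hAtop, ENNReal.top_rpow_of_pos (by positivity), ENNReal.mul_top
        (by simp [ENNReal.ofReal_eq_zero, not_le, hCpos]), ENNReal.top_mul]
      simp only [ne_eq, ENNReal.rpow_eq_zero_iff, not_or]
      constructor
      · rintro ⟨h, -⟩; exact hB0 h
      · rintro ⟨h, -⟩; exact hBtop h
    rw [h1]; simp
  -- main case
  have hs : ∀ x, (0:ℝ) ≤ ξ x := hξ0
  have hmA : Measurable (fun x => deriv u x ^ 2 * ξ x ^ (2 * r + 2)) :=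
    ((measurable_deriv u).pow_const 2).mul (hcont _ (by linarith)).measurable
  set g1 : ℝ → ℝ := fun x => |u x| * ξ x ^ r with hg1
  set g2 : ℝ → ℝ := fun x => |deriv u x| * ξ x ^ (r + 1) with hg2
  have hg1n : ∀ x, 0 ≤ g1 x := fun x =>
    mul_nonneg (abs_nonneg _) (Real.rpow_nonneg (hs x) _)
  have hg2n : ∀ x, 0 ≤ g2 x := fun x =>
    mul_nonneg (abs_nonneg _) (Real.rpow_nonneg (hs x) _)
  have hmg1 : Measurable g1 := (hu_c.abs.measurable).mul (hcont r hr).measurable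
  have hmg2 : Measurable g2 := (measurable_deriv u).abs.mul (hcont (r+1) (by linarith)).measurable
  have hg1sq : ∀ x, g1 x ^ 2 = u x ^ 2 * ξ x ^ (2 * r) := by
    intro x
    rw [hg1]; simp only []
    rw [mul_pow, sq_abs]
    congr 1
    rw [← Real.rpow_natCast (ξ x ^ r) 2, ← Real.rpow_mul (hs x)]
    congr 1; push_cast; ring
  have hg2sq : ∀ x, g2 x ^ 2 = deriv u x ^ 2 * ξ x ^ (2 * r + 2) := by
    intro x
    rw [hg2]; simp only []
    rw [mul_pow, sq_abs]
    congr 1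
    rw [← Real.rpow_natCast (ξ x ^ (r+1)) 2, ← Real.rpow_mul (hs x)]
    congr 1; push_cast; ring
  -- Cauchy–Schwarz
  have hCS : ∫⁻ x, ENNReal.ofReal (g1 x * g2 x) ≤ B ^ ((1:ℝ)/2) * A ^ ((1:ℝ)/2) := by
    have h22 : Real.HolderConjugate 2 2 := Real.HolderConjugate.two_two
    have hH := ENNReal.lintegral_mul_le_Lp_mul_Lq volume h22
      (f := fun x => ENNReal.ofReal (g1 x)) (g := fun x => ENNReal.ofReal (g2 x))
      hmg1.ennreal_ofReal.aemeasurable hmg2.ennreal_ofReal.aemeasurable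
    have e1 : ∀ x, ENNReal.ofReal (g1 x) ^ (2:ℝ) = ENNReal.ofReal (u x ^ 2 * ξ x ^ (2 * r)) := by
      intro x
      conv_lhs => rw [show ((2:ℝ) = ((2:ℕ):ℝ)) by norm_num, ENNReal.rpow_natCast]
      rw [← ENNReal.ofReal_pow (hg1n x), hg1sq x]
    have e2 : ∀ x, ENNReal.ofReal (g2 x) ^ (2:ℝ) = ENNReal.ofReal (deriv u x ^ 2 * ξ x ^ (2 * r + 2)) := by
      intro x
      conv_lhs => rw [show ((2:ℝ) = ((2:ℕ):ℝ)) by norm_num, ENNReal.rpow_natCast]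
      rw [← ENNReal.ofReal_pow (hg2n x), hg2sq x]
    calc ∫⁻ x, ENNReal.ofReal (g1 x * g2 x)
        = ∫⁻ x, ENNReal.ofReal (g1 x) * ENNReal.ofReal (g2 x) := by
          apply lintegral_congr; intro x; exact ENNReal.ofReal_mul (hg1n x)
      _ ≤ (∫⁻ x, ENNReal.ofReal (g1 x) ^ (2:ℝ)) ^ ((1:ℝ)/2) *
          (∫⁻ x, ENNReal.ofReal (g2 x) ^ (2:ℝ)) ^ ((1:ℝ)/2) := hH
      _ = B ^ ((1:ℝ)/2) * A ^ ((1:ℝ)/2) := by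
          rw [lintegral_congr e1, lintegral_congr e2, ← hA, ← hB]
  -- derivative of f = u² ξ^{2r+1}
  set f : ℝ → ℝ := fun x => u x ^ 2 * ξ x ^ (2 * r + 1) with hf
  set F' : ℝ → ℝ := fun x => 2 * u x * deriv u x * ξ x ^ (2 * r + 1) +
      u x ^ 2 * ((2 * r + 1) * ξ x ^ (2 * r) * deriv ξ x) with hF'
  have hmF' : Measurable F' := by
    rw [hF']
    apply Measurable.add
    · exact ((hu_c.measurable.const_mul 2).mul (measurable_deriv u)).mul
        (hcont _ (by linarith)).measurable
    · exact (hu_c.pow 2).measurable.mul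
        (((hcont _ (by linarith)).measurable.const_mul _).mul hξ'_c.measurable)
  have hdf : ∀ x, HasDerivAt f (F' x) x := by
    intro x
    have h1 : HasDerivAt u (deriv u x) x := (hu x).hasDerivAt
    have h2 : HasDerivAt (fun y => u y ^ 2) (2 * u x ^ 1 * deriv u x) x := by
      simpa using h1.fun_pow 2
    have hξd : HasDerivAt ξ (deriv ξ x) x := (hξsm.differentiable (by simp) x).hasDerivAt
    have h3 : HasDerivAt (fun y => ξ y ^ (2 * r + 1)) ((2 * r + 1) * ξ x ^ (2 * r) * deriv ξ x) x := by
      have h4 := (Real.hasDerivAt_rpow_const (x := ξ x) (p := 2 * r + 1)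
        (Or.inr (by linarith))).comp x hξd
      have h5 : 2 * r + 1 - 1 = 2 * r := by ring
      simpa [Function.comp_def, h5, mul_assoc] using h4
    have h6 : HasDerivAt (fun y => u y ^ 2 * ξ y ^ (2 * r + 1))
        (2 * u x ^ 1 * deriv u x * ξ x ^ (2 * r + 1) + u x ^ 2 * ((2 * r + 1) * ξ x ^ (2 * r) * deriv ξ x)) x :=
      h2.fun_mul h3
    rw [hf, hF']
    convert h6 using 1
    beta_reduce
    ring
  -- support of f
  have hsupp : ∃ y₀ : ℝ, ∀ y ≤ y₀, f y = 0 := by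
    obtain ⟨R, hR⟩ := hξcs.isBounded.subset_closedBall 0
    refine ⟨-R - 1, fun y hy => ?_⟩
    have hxi : ξ y = 0 := by
      apply image_eq_zero_of_notMem_tsupport
      intro hmem
      have hyR := hR hmem
      rw [Metric.mem_closedBall, Real.dist_eq, sub_zero, abs_le] at hyR
      linarith [hyR.1]
    rw [hf]; simp only []
    rw [hxi, Real.zero_rpow (by linarith), mul_zero]
  -- integrability
  have hBint : Integrable (fun x => u x ^ 2 * ξ x ^ (2 * r)) := by
    refine ⟨hmB.aestronglyMeasurable, ?_⟩
    rw [hasFiniteIntegral_iff_ofReal (Eventually.of_forall fun x =>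
      mul_nonneg (sq_nonneg _) (Real.rpow_nonneg (hs x) _))]
    exact lt_top_iff_ne_top.mpr (hB ▸ hBtop)
  have hg12int : Integrable (fun x => g1 x * g2 x) := by
    refine ⟨(hmg1.mul hmg2).aestronglyMeasurable, ?_⟩
    rw [hasFiniteIntegral_iff_ofReal (Eventually.of_forall fun x =>
      mul_nonneg (hg1n x) (hg2n x))]
    refine lt_of_le_of_lt hCS ?_
    exact ENNReal.mul_lt_top
      (ENNReal.rpow_lt_top_of_nonneg (by norm_num) hBtop)
      (ENNReal.rpow_lt_top_of_nonneg (by norm_num) hAtop)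
  have hgint : Integrable (fun x => 2 * (g1 x * g2 x) + c * (u x ^ 2 * ξ x ^ (2 * r))) :=
    (hg12int.const_mul 2).add (hBint.const_mul c)
  have hbound : ∀ x, |F' x| ≤ 2 * (g1 x * g2 x) + c * (u x ^ 2 * ξ x ^ (2 * r)) := by
    intro x
    have hsplit : ξ x ^ (2 * r + 1) = ξ x ^ r * ξ x ^ (r + 1) := by
      rw [← Real.rpow_add' (hs x) (by intro h; nlinarith)]
      congr 1; ring
    have h1 : |2 * u x * deriv u x * ξ x ^ (2 * r + 1)| ≤ 2 * (g1 x * g2 x) := by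
      rw [abs_mul, abs_mul, abs_mul, abs_two, abs_of_nonneg (Real.rpow_nonneg (hs x) _), hsplit,
        hg1, hg2]
      exact le_of_eq (by ring)
    have h2 : |u x ^ 2 * ((2 * r + 1) * ξ x ^ (2 * r) * deriv ξ x)| ≤
        c * (u x ^ 2 * ξ x ^ (2 * r)) := by
      rw [abs_mul, abs_mul, abs_mul, abs_of_nonneg (sq_nonneg (u x)),
        abs_of_nonneg (show (0:ℝ) ≤ 2 * r + 1 by linarith),
        abs_of_nonneg (Real.rpow_nonneg (hs x) _)]
      calc u x ^ 2 * ((2 * r + 1) * ξ x ^ (2 * r) * |deriv ξ x|)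
          ≤ u x ^ 2 * ((2 * r + 1) * ξ x ^ (2 * r) * Λ) := by
            apply mul_le_mul_of_nonneg_left _ (sq_nonneg _)
            exact mul_le_mul_of_nonneg_left (hξΛ x)
              (mul_nonneg (by linarith) (Real.rpow_nonneg (hs x) _))
        _ = c * (u x ^ 2 * ξ x ^ (2 * r)) := by rw [hc]; ring
    calc |F' x| ≤ |2 * u x * deriv u x * ξ x ^ (2 * r + 1)| +
        |u x ^ 2 * ((2 * r + 1) * ξ x ^ (2 * r) * deriv ξ x)| := by rw [hF']; exact abs_add_le _ _
      _ ≤ 2 * (g1 x * g2 x) + c * (u x ^ 2 * ξ x ^ (2 * r)) := add_le_add h1 h2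
  have hF'int : Integrable F' := hgint.mono' hmF'.aestronglyMeasurable
    (Eventually.of_forall fun x => by rw [Real.norm_eq_abs]; exact hbound x)
  set M := ∫ t, |F' t| with hM
  have hM0 : 0 ≤ M := integral_nonneg fun t => abs_nonneg _
  have hfM : ∀ x, u x ^ 2 * ξ x ^ (2 * r + 1) ≤ M := by
    intro x
    have h := sup_le_integral_deriv f F' hdf hF'int hsupp x
    rw [hf] at h
    exact h
  -- bound on ofReal M
  have hMbound : ENNReal.ofReal M ≤ 2 * (B ^ ((1:ℝ)/2) * A ^ ((1:ℝ)/2)) + ENNReal.ofReal c * B := by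
    rw [hM, ofReal_integral_eq_lintegral_ofReal hF'int.abs
      (Eventually.of_forall fun t => abs_nonneg _)]
    calc ∫⁻ t, ENNReal.ofReal |F' t|
        ≤ ∫⁻ t, (ENNReal.ofReal (2 * (g1 t * g2 t)) +
            ENNReal.ofReal (c * (u t ^ 2 * ξ t ^ (2 * r)))) := by
          apply lintegral_mono; intro t
          exact le_trans (ENNReal.ofReal_le_ofReal (hbound t)) ENNReal.ofReal_add_le
      _ = (∫⁻ t, ENNReal.ofReal (2 * (g1 t * g2 t))) +
          ∫⁻ t, ENNReal.ofReal (c * (u t ^ 2 * ξ t ^ (2 * r))) :=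
          lintegral_add_left (((hmg1.mul hmg2).const_mul 2).ennreal_ofReal) _
      _ ≤ 2 * (B ^ ((1:ℝ)/2) * A ^ ((1:ℝ)/2)) + ENNReal.ofReal c * B := by
          apply add_le_add
          · have : ∀ t, ENNReal.ofReal (2 * (g1 t * g2 t)) =
                (2:ℝ≥0∞) * ENNReal.ofReal (g1 t * g2 t) := by
              intro t
              rw [ENNReal.ofReal_mul (by norm_num)]
              norm_num
            rw [lintegral_congr this, lintegral_const_mul' _ _ (by norm_num)]
            exact mul_le_mul_right hCS 2
          · have : ∀ t, ENNReal.ofReal (c * (u t ^ 2 * ξ t ^ (2 * r))) =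
                ENNReal.ofReal c * ENNReal.ofReal (u t ^ 2 * ξ t ^ (2 * r)) := fun t =>
              ENNReal.ofReal_mul hc0
            rw [lintegral_congr this, lintegral_const_mul' _ _ ENNReal.ofReal_ne_top, ← hB]
  -- bound on L
  have hq : (0:ℝ) ≤ (p - 2) / 2 := by linarith
  have hLb : L ≤ ENNReal.ofReal (M ^ ((p - 2) / 2)) * B := by
    calc L = ∫⁻ x, ENNReal.ofReal ((u x ^ 2 * ξ x ^ (2 * r + 1)) ^ ((p - 2) / 2) *
          (u x ^ 2 * ξ x ^ (2 * r))) := by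
          rw [hL]; apply lintegral_congr; intro x; rw [hpt x]
      _ ≤ ∫⁻ x, ENNReal.ofReal (M ^ ((p - 2) / 2) * (u x ^ 2 * ξ x ^ (2 * r))) := by
          apply lintegral_mono; intro x
          apply ENNReal.ofReal_le_ofReal
          apply mul_le_mul_of_nonneg_right _
            (mul_nonneg (sq_nonneg _) (Real.rpow_nonneg (hs x) _))
          exact Real.rpow_le_rpow
            (mul_nonneg (sq_nonneg _) (Real.rpow_nonneg (hs x) _)) (hfM x) hq
      _ = ENNReal.ofReal (M ^ ((p - 2) / 2)) * B := by
          have : ∀ x, ENNReal.ofReal (M ^ ((p - 2) / 2) * (u x ^ 2 * ξ x ^ (2 * r))) =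
              ENNReal.ofReal (M ^ ((p - 2) / 2)) * ENNReal.ofReal (u x ^ 2 * ξ x ^ (2 * r)) :=
            fun x => ENNReal.ofReal_mul (Real.rpow_nonneg hM0 _)
          rw [lintegral_congr this, lintegral_const_mul' _ _ ENNReal.ofReal_ne_top, ← hB]
  -- final assembly
  have hthp : ((p - 2) / 2) * (1 / p) = th := by rw [hth]; field_simp
  have he1 : th / 2 + 1 / p = (1 - th) / 2 := by rw [hth]; field_simp; ring
  have he2 : th + 1 / p = 1 / 2 := by rw [hth]; field_simp; ring
  have h2th : (2:ℝ≥0∞) ^ th ≤ ENNReal.ofReal C := by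
    calc (2:ℝ≥0∞) ^ th ≤ 2 ^ (1:ℝ) :=
          ENNReal.rpow_le_rpow_of_exponent_le (by norm_num) hth1.le
      _ = 2 := by norm_num
      _ ≤ ENNReal.ofReal C := by
          rw [show ((2:ℝ≥0∞) = ENNReal.ofReal 2) by norm_num]
          exact ENNReal.ofReal_le_ofReal (by rw [hC]; nlinarith [Real.rpow_nonneg hc0 th])
  have hcth : ENNReal.ofReal (c ^ th) ≤ ENNReal.ofReal C :=
    ENNReal.ofReal_le_ofReal (by rw [hC]; linarith)
  calc L ^ (1/p)
      ≤ (ENNReal.ofReal (M ^ ((p - 2) / 2)) * B) ^ (1/p) :=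
        ENNReal.rpow_le_rpow hLb (by positivity)
    _ = (ENNReal.ofReal M) ^ th * B ^ ((1:ℝ)/p) := by
        rw [ENNReal.mul_rpow_of_nonneg _ _ (by positivity),
          ← ENNReal.ofReal_rpow_of_nonneg hM0 hq, ← ENNReal.rpow_mul, hthp]
    _ ≤ ((2 * (B ^ ((1:ℝ)/2) * A ^ ((1:ℝ)/2))) ^ th + (ENNReal.ofReal c * B) ^ th) *
        B ^ ((1:ℝ)/p) := by
        apply mul_le_mul_left
        exact le_trans (ENNReal.rpow_le_rpow hMbound hth0.le)
          (ENNReal.rpow_add_le_add_rpow _ _ hth0.le hth1.le)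
    _ = 2 ^ th * A ^ (th/2) * (B ^ (th/2) * B ^ ((1:ℝ)/p)) +
        ENNReal.ofReal (c ^ th) * (B ^ th * B ^ ((1:ℝ)/p)) := by
        rw [ENNReal.mul_rpow_of_nonneg _ _ hth0.le,
          ENNReal.mul_rpow_of_nonneg _ _ hth0.le,
          ENNReal.mul_rpow_of_nonneg (ENNReal.ofReal c) B hth0.le,
          ← ENNReal.rpow_mul B (1/2) th, ← ENNReal.rpow_mul A (1/2) th,
          show (1/2) * th = th/2 by ring,
          ← ENNReal.ofReal_rpow_of_nonneg hc0 hth0.le]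
        ring
    _ = 2 ^ th * A ^ (th/2) * B ^ ((1 - th)/2) +
        ENNReal.ofReal (c ^ th) * B ^ ((1:ℝ)/2) := by
        rw [← ENNReal.rpow_add _ _ hB0 hBtop, ← ENNReal.rpow_add _ _ hB0 hBtop, he1, he2]
    _ ≤ ENNReal.ofReal C * A ^ (th/2) * B ^ ((1 - th)/2) +
        ENNReal.ofReal C * B ^ ((1:ℝ)/2) := by
        apply add_le_add
        · exact mul_le_mul_left (mul_le_mul_left h2th _) _
        · exact mul_le_mul_left hcth _
end

section
/- Let a, b, C > 0, and let F : [t₀, T) → (0,∞) be C¹ with F' (t) ≤ C(F(t) + F(t)^q) for some q > 1. If F(t_j) → ∞ along some sequence t_j → T with T < ∞, then C(T - t₀) ≥ (1/(q-1)) · log( (1 + F(t₀)^{q-1}) / F(t₀)^{q-1} ). -/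
open Filter Set
open scoped Topology

/-- Key differential-inequality integration step of the blow-up rate lemma:
if `F > 0` is differentiable on `[t₀, T)` with `F' ≤ C(F + F^q)` for `q > 1`,
and `F(t_j) → ∞` along a sequence `t_j → T` with `T < ∞`, then
`C(T - t₀) ≥ (1/(q-1)) log((1 + F(t₀)^{q-1}) / F(t₀)^{q-1})`. -/
theorem log_blowup_estimate (T t₀ C q : ℝ) (hT : t₀ < T) (hC : 0 < C)
    (hq : 1 < q) (F F' : ℝ → ℝ)
    (hpos : ∀ t ∈ Set.Ico t₀ T, 0 < F t)
    (hderiv : ∀ t ∈ Set.Ico t₀ T, HasDerivAt F (F' t) t)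
    (hineq : ∀ t ∈ Set.Ico t₀ T, F' t ≤ C * (F t + F t ^ q))
    (tj : ℕ → ℝ) (htj : ∀ j, tj j ∈ Set.Ico t₀ T)
    (htjT : Tendsto tj atTop (𝓝 T))
    (hFtj : Tendsto (fun j => F (tj j)) atTop atTop) :
    (1 / (q - 1)) * Real.log ((1 + F t₀ ^ (q - 1)) / F t₀ ^ (q - 1)) ≤
      C * (T - t₀) := by
  have hq1 : (0:ℝ) < q - 1 := by linarith
  set c : ℝ := 1 / (q - 1) with hc
  have hcpos : 0 < c := by positivity
  set H : ℝ → ℝ := fun t => Real.log (F t) - c * Real.log (1 + F t ^ (q - 1)) - C * t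
    with hH
  -- derivative of H at points of Ico t₀ T
  have hHderiv : ∀ t ∈ Set.Ico t₀ T,
      HasDerivAt H (F' t / F t
        - c * (F' t * (q - 1) * F t ^ (q - 1 - 1) / (1 + F t ^ (q - 1))) - C) t := by
    intro t ht
    have hFt := hpos t ht
    have hF := hderiv t ht
    have h2 : HasDerivAt (fun s => F s ^ (q - 1))
        (F' t * (q - 1) * F t ^ (q - 1 - 1)) t := hF.rpow_const (Or.inl hFt.ne')
    have hbpos : 0 < 1 + F t ^ (q - 1) := by positivity
    have h3 := (h2.const_add 1).log hbpos.ne'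
    have h1 := hF.log hFt.ne'
    have X := (h1.sub (h3.const_mul c)).sub ((hasDerivAt_id t).const_mul C)
    simp only [mul_one] at X
    exact X
  -- the derivative is nonpositive
  have hHle : ∀ t ∈ Set.Ico t₀ T,
      F' t / F t - c * (F' t * (q - 1) * F t ^ (q - 1 - 1) / (1 + F t ^ (q - 1))) - C ≤ 0 := by
    intro t ht
    have hFt := hpos t ht
    have hbpos : 0 < 1 + F t ^ (q - 1) := by positivity
    have e1 : F t ^ (q - 1 - 1) * F t = F t ^ (q - 1) := by
      rw [← Real.rpow_add_one hFt.ne' (q - 1 - 1)]; ring_nf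
    have e2 : F t * F t ^ (q - 1) = F t ^ q := by
      rw [mul_comm, ← Real.rpow_add_one hFt.ne' (q - 1)]; ring_nf
    have key : F' t / F t - c * (F' t * (q - 1) * F t ^ (q - 1 - 1) / (1 + F t ^ (q - 1)))
        = F' t / (F t + F t ^ q) := by
      have e3 : F t ^ (q - 1 - 1) = F t ^ (q - 1) / F t := by
        rw [← e1]; field_simp
      rw [e3, ← e2, hc]
      field_simp
      ring
    have hsum : 0 < F t + F t ^ q := by
      have : 0 < F t ^ q := Real.rpow_pos_of_pos hFt q
      linarith
    have : F' t / (F t + F t ^ q) ≤ C := by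
      rw [div_le_iff₀ hsum]
      calc F' t ≤ C * (F t + F t ^ q) := hineq t ht
        _ = C * (F t + F t ^ q) := rfl
    linarith [key ▸ this]
  -- H is antitone on [t₀, s] for each s ∈ Ico t₀ T, so H s ≤ H t₀
  have hmono : ∀ s ∈ Set.Ico t₀ T, H s ≤ H t₀ := by
    intro s hs
    rcases hs with ⟨hs1, hs2⟩
    have hsub : Set.Icc t₀ s ⊆ Set.Ico t₀ T := fun x hx => ⟨hx.1, lt_of_le_of_lt hx.2 hs2⟩
    have hsub' : Set.Ioo t₀ s ⊆ Set.Ico t₀ T := fun x hx =>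
      hsub ⟨le_of_lt hx.1, le_of_lt hx.2⟩
    have hcont : ContinuousOn H (Set.Icc t₀ s) := fun x hx =>
      ((hHderiv x (hsub hx)).continuousAt).continuousWithinAt
    have hdiff : DifferentiableOn ℝ H (interior (Set.Icc t₀ s)) := by
      rw [interior_Icc]
      exact fun x hx => ((hHderiv x (hsub' hx)).differentiableAt).differentiableWithinAt
    have hd0 : ∀ x ∈ interior (Set.Icc t₀ s), deriv H x ≤ 0 := by
      rw [interior_Icc]
      intro x hx
      rw [(hHderiv x (hsub' hx)).deriv]
      exact hHle x (hsub' hx)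
    exact antitoneOn_of_deriv_nonpos (convex_Icc t₀ s) hcont hdiff hd0
      (Set.left_mem_Icc.mpr hs1) (Set.right_mem_Icc.mpr hs1) hs1
  -- limit of H along tj : → -C*T
  have hlim : Tendsto (fun j => H (tj j)) atTop (𝓝 (0 - C * T)) := by
    have hL : Tendsto (fun j => Real.log (F (tj j))
        - c * Real.log (1 + F (tj j) ^ (q - 1))) atTop (𝓝 0) := by
      have h1 : Tendsto (fun j => (F (tj j)) ^ (-(q - 1))) atTop (𝓝 0) :=
        (tendsto_rpow_neg_atTop hq1).comp hFtj
      have h2 : Tendsto (fun j => (F (tj j)) ^ (-(q - 1)) + 1) atTop (𝓝 (0 + 1)) :=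
        h1.add tendsto_const_nhds
      rw [zero_add] at h2
      have h3 : Tendsto (fun j => Real.log ((F (tj j)) ^ (-(q - 1)) + 1)) atTop (𝓝 0) := by
        have := (Real.continuousAt_log one_ne_zero).tendsto.comp h2
        simpa [Function.comp_def] using this
      have h4 : Tendsto (fun j => -c * Real.log ((F (tj j)) ^ (-(q - 1)) + 1))
          atTop (𝓝 (-c * 0)) := h3.const_mul (-c)
      rw [mul_zero] at h4
      refine h4.congr fun j => ?_
      have hx : 0 < F (tj j) := hpos _ (htj j)
      have hb : 0 < F (tj j) ^ (q - 1) := Real.rpow_pos_of_pos hx _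
      have harg : (F (tj j)) ^ (-(q - 1)) + 1 = (1 + F (tj j) ^ (q - 1)) / F (tj j) ^ (q - 1) := by
        rw [Real.rpow_neg hx.le]
        field_simp
      rw [harg, Real.log_div (by positivity) hb.ne', Real.log_rpow hx]
      rw [hc]
      field_simp
      ring
    have h5 : Tendsto (fun j => C * tj j) atTop (𝓝 (C * T)) := htjT.const_mul C
    exact hL.sub h5
  -- conclude -C*T ≤ H t₀
  have hfin : 0 - C * T ≤ H t₀ := le_of_tendsto hlim (Eventually.of_forall fun j => hmono _ (htj j))
  have ht0 : t₀ ∈ Set.Ico t₀ T := ⟨le_refl _, hT⟩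
  have hF0 : 0 < F t₀ := hpos _ ht0
  have hA : 0 < F t₀ ^ (q - 1) := Real.rpow_pos_of_pos hF0 _
  have hlogF : Real.log (F t₀) = c * Real.log (F t₀ ^ (q - 1)) := by
    rw [Real.log_rpow hF0, hc]
    field_simp
  rw [Real.log_div (by positivity) hA.ne']
  have := hfin
  rw [hH] at this
  simp only at this
  rw [hlogF] at this
  nlinarith [this]
end
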